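/- arXiv:1802.08745 — 5 statements merged into one kernel-verified Lean document; each statement's English description precedes it below -/
import Mathlib

section
/- Let N ≥ 1 and l ∈ ℤ^N with the convention l_0 = l_{N+1} = 0. Then Σ_{n=1}^{N-1} (l_n ∧̃ l_{n+1}) = Σ_{n=1}^N |l_n| - (1/2)·Σ_{n=0}^N |l_n + l_{n+1}|, where x ∧̃ y := min(|x|,|y|) if xy < 0 and 0 otherwise. -/
lemma key_aux (x y : ℤ) :
    2 * (if x * y < 0 then min |x| |y| else 0) = |x| + |y| - |x + y| := by
  simp only [Int.abs_eq_natAbs]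
  split_ifs with h
  · rw [mul_neg_iff] at h
    omega
  · push_neg at h
    rw [mul_nonneg_iff] at h
    omega

lemma ham_aux (l : ℕ → ℤ) (M : ℕ) :
    2 * ∑ n ∈ Finset.range M,
        (if l (n + 1) * l (n + 1 + 1) < 0 then min |l (n + 1)| |l (n + 1 + 1)| else 0)
      = 2 * ∑ n ∈ Finset.range M, |l (n + 1)| + |l (M + 1)| - |l 1|
        - ∑ n ∈ Finset.range M, |l (n + 1) + l (n + 1 + 1)| := by
  induction M with
  | zero => simp
  | succ M ih =>
    rw [Finset.sum_range_succ, Finset.sum_range_succ, Finset.sum_range_succ]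
    have := key_aux (l (M + 1)) (l (M + 1 + 1))
    linarith

lemma conv_aux (f : ℕ → ℤ) (K : ℕ) :
    ∑ n ∈ Finset.Icc 1 K, f n = ∑ n ∈ Finset.range K, f (n + 1) := by
  induction K with
  | zero => simp
  | succ K ih =>
    rw [Finset.sum_Icc_succ_top (Nat.succ_le_succ (Nat.zero_le K)), ih,
      Finset.sum_range_succ]

/-- For `l = (l_1,…,l_N)` with the convention `l_0 = l_{N+1} = 0`,
`Σ_{n=1}^{N-1} (l_n ∧̃ l_{n+1}) = Σ_{n=1}^N |l_n| - (1/2) Σ_{n=0}^N |l_n + l_{n+1}|`,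
where `x ∧̃ y = min |x| |y|` if `xy < 0` and `0` otherwise. -/
theorem hamiltonian_rewrite (N : ℕ) (hN : 1 ≤ N) (l : ℕ → ℤ)
    (hl0 : l 0 = 0) (hlN : l (N + 1) = 0) :
    ((∑ n ∈ Finset.Icc 1 (N - 1),
        (if l n * l (n + 1) < 0 then min |l n| |l (n + 1)| else 0) : ℤ) : ℚ)
      = (∑ n ∈ Finset.Icc 1 N, (|l n| : ℚ))
        - (1 / 2) * ∑ n ∈ Finset.range (N + 1), (|l n + l (n + 1)| : ℚ) := by
  obtain ⟨M, rfl⟩ : ∃ M, N = M + 1 := ⟨N - 1, (Nat.succ_pred_eq_of_pos hN).symm⟩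
  have hZ : 2 * (∑ n ∈ Finset.Icc 1 (M + 1 - 1),
        (if l n * l (n + 1) < 0 then min |l n| |l (n + 1)| else 0))
      = 2 * (∑ n ∈ Finset.Icc 1 (M + 1), |l n|)
        - ∑ n ∈ Finset.range (M + 1 + 1), |l n + l (n + 1)| := by
    have h1 := ham_aux l M
    rw [show M + 1 - 1 = M from rfl, conv_aux, conv_aux,
      Finset.sum_range_succ (fun n => |l (n + 1)|) M,
      Finset.sum_range_succ' (fun n => |l n + l (n + 1)|) (M + 1),
      Finset.sum_range_succ (fun n => |l (n + 1) + l (n + 1 + 1)|) M]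
    simp only [hl0, hlN, zero_add, add_zero]
    linarith
  set S : ℤ := ∑ n ∈ Finset.Icc 1 (M + 1 - 1),
      (if l n * l (n + 1) < 0 then min |l n| |l (n + 1)| else 0) with hS
  have cast := congrArg (fun z : ℤ => (z : ℚ)) hZ
  push_cast at cast
  push_cast
  linarith
end

section
/- For β > 0 and L ≥ 1, the IPDSAW partition function Z_{L,β} := Σ_{N=1}^L Σ_{l ∈ L_{N,L}} exp(β·Σ_{n=1}^{N-1} l_n ∧̃ l_{n+1}) satisfies Z_{L,β} = c_β e^{βL} Σ_{N=1}^L Γ_β^N · P_β(V_{N+1} = 0, Σ_{i=1}^N |V_i| = L - N), where (V_i) is a random walk with i.i.d. increments of discrete Laplace law P_β(k) ∝ e^{-(β/2)|k|}, V_0 = 0, Γ_β = c_β e^{-β}, and c_β is the normalizing constant. -/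
lemma twomin (x y : ℤ) : 2 * (if 0 < x*y then min |x| |y| else 0) = |x| + |y| - |y - x| := by
  rcases lt_trichotomy x 0 with hx|hx|hx <;> rcases lt_trichotomy y 0 with hy|hy|hy <;>
    simp only [Int.abs_eq_natAbs] <;>
    first
    | (rw [if_pos (by nlinarith)]; omega)
    | (rw [if_neg (by nlinarith)]; omega)

lemma pt (j : ℕ) (x y : ℤ) :
    (if ((-1:ℤ))^j * x * ((-1:ℤ)^(j+1) * y) < 0 then min |(-1:ℤ)^j * x| |(-1:ℤ)^(j+1) * y| else 0)
      = (if 0 < x * y then min |x| |y| else 0) := by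
  have habs : ∀ (k : ℕ) (z : ℤ), |(-1:ℤ)^k * z| = |z| := fun k z => by
    rw [abs_mul, abs_pow, abs_neg, abs_one, one_pow, one_mul]
  have hcond : (-1:ℤ)^j * x * ((-1:ℤ)^(j+1) * y) = -(x*y) := by
    have : (-1:ℤ)^j * (-1:ℤ)^(j+1) = -1 := by
      rw [← pow_add, show j + (j+1) = 2*j+1 from by ring, pow_succ, pow_mul]
      norm_num
    calc (-1:ℤ)^j * x * ((-1:ℤ)^(j+1) * y) = ((-1:ℤ)^j * (-1:ℤ)^(j+1)) * (x*y) := by ring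
      _ = -(x*y) := by rw [this]; ring
  rw [hcond, habs, habs]; simp only [neg_lt_zero]

lemma tele0 (M : ℕ) (a b : ℕ → ℤ) :
    ∑ i ∈ Finset.range M, (a i + a (i+1) - b (i+1)) + ∑ i ∈ Finset.range (M+2), b i
      = 2 * ∑ i ∈ Finset.range (M+1), a i - a 0 - a M + b 0 + b (M+1) := by
  induction M with
  | zero => simp [Finset.sum_range_succ]; ring
  | succ M ih =>
    simp only [Finset.sum_range_succ, show M+1+1 = M+2 from rfl, show M+1+2 = M+3 from rfl,
      show M+2+1 = M+3 from rfl] at ih ⊢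
    omega

lemma tele (M : ℕ) (a b : ℕ → ℤ) (hb0 : b 0 = a 0) (hbN : b (M+1) = a M) :
    ∑ i ∈ Finset.range M, (a i + a (i+1) - b (i+1)) + ∑ i ∈ Finset.range (M+2), b i
      = 2 * ∑ i ∈ Finset.range (M+1), a i := by
  rw [tele0]; omega

lemma key (M : ℕ) (V : Fin (M+3) → ℤ) (h0 : V 0 = 0) (hlast : V (Fin.last (M+2)) = 0) :
    2 * (∑ i : Fin (M+1), if h : (i:ℕ)+1 < M+1 then
        (if ((-1:ℤ))^(i:ℕ) * V i.succ.castSucc * ((-1:ℤ)^((i:ℕ)+1) * V (⟨(i:ℕ)+1,h⟩ : Fin (M+1)).succ.castSucc) < 0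
          then min |(-1:ℤ)^(i:ℕ) * V i.succ.castSucc| |(-1:ℤ)^((i:ℕ)+1) * V (⟨(i:ℕ)+1,h⟩ : Fin (M+1)).succ.castSucc|
          else 0) else 0)
      + ∑ i : Fin (M+2), |V i.succ - V i.castSucc|
      = 2 * ∑ i : Fin (M+1), |V i.succ.castSucc| := by
  set W : ℕ → ℤ := fun j => if h : j < M+3 then V ⟨j, h⟩ else 0 with hWdef
  have hW : ∀ (k : Fin (M+3)), V k = W (k : ℕ) := fun k => by simp [hWdef, k.isLt]
  have hW0 : W 0 = 0 := by rw [← h0]; exact (hW 0).symm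
  have hWlast : W (M+2) = 0 := by
    rw [← hlast, hW (Fin.last (M+2))]; rfl
  have h1 : ∑ i : Fin (M+2), |V i.succ - V i.castSucc|
      = ∑ j ∈ Finset.range (M+2), |W (j+1) - W j| := by
    rw [← Fin.sum_univ_eq_sum_range (fun j => |W (j+1) - W j|) (M+2)]
    refine Finset.sum_congr rfl fun i _ => ?_
    rw [hW i.succ, hW i.castSucc]
    simp [Fin.val_succ, Fin.coe_castSucc]
  have h2 : ∑ i : Fin (M+1), |V i.succ.castSucc| = ∑ j ∈ Finset.range (M+1), |W (j+1)| := by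
    rw [← Fin.sum_univ_eq_sum_range (fun j => |W (j+1)|) (M+1)]
    refine Finset.sum_congr rfl fun i _ => ?_
    rw [hW i.succ.castSucc]
    simp [Fin.val_succ, Fin.coe_castSucc]
  have h3 : (∑ i : Fin (M+1), if h : (i:ℕ)+1 < M+1 then
        (if ((-1:ℤ))^(i:ℕ) * V i.succ.castSucc * ((-1:ℤ)^((i:ℕ)+1) * V (⟨(i:ℕ)+1,h⟩ : Fin (M+1)).succ.castSucc) < 0
          then min |(-1:ℤ)^(i:ℕ) * V i.succ.castSucc| |(-1:ℤ)^((i:ℕ)+1) * V (⟨(i:ℕ)+1,h⟩ : Fin (M+1)).succ.castSucc|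
          else 0) else 0)
      = ∑ j ∈ Finset.range (M+1), (if j+1 < M+1 then
          (if 0 < W (j+1) * W (j+2) then min |W (j+1)| |W (j+2)| else 0) else 0) := by
    rw [← Fin.sum_univ_eq_sum_range (fun j => if j+1 < M+1 then
          (if 0 < W (j+1) * W (j+2) then min |W (j+1)| |W (j+2)| else 0) else 0) (M+1)]
    refine Finset.sum_congr rfl fun i _ => ?_
    by_cases h : (i:ℕ)+1 < M+1
    · rw [dif_pos h, if_pos h]
      have e1 : V i.succ.castSucc = W ((i:ℕ)+1) := by
        rw [hW i.succ.castSucc]; simp [Fin.val_succ, Fin.coe_castSucc]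
      have e2 : V (⟨(i:ℕ)+1,h⟩ : Fin (M+1)).succ.castSucc = W ((i:ℕ)+2) := by
        rw [hW]; simp [Fin.val_succ, Fin.coe_castSucc]
      rw [e1, e2]
      exact pt (i:ℕ) (W ((i:ℕ)+1)) (W ((i:ℕ)+2))
    · rw [dif_neg h, if_neg h]
  rw [h1, h2, h3]
  rw [Finset.sum_range_succ (fun j => if j+1 < M+1 then
          (if 0 < W (j+1) * W (j+2) then min |W (j+1)| |W (j+2)| else 0) else 0) M]
  rw [if_neg (by omega)]
  rw [add_zero, Finset.mul_sum]
  have h4 : ∀ j ∈ Finset.range M, 2 * (if j+1 < M+1 then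
          (if 0 < W (j+1) * W (j+2) then min |W (j+1)| |W (j+2)| else 0) else 0)
      = |W (j+1)| + |W (j+2)| - |W (j+2) - W (j+1)| := by
    intro j hj
    rw [if_pos (by simp at hj; omega)]
    exact twomin _ _
  rw [Finset.sum_congr rfl h4]
  exact tele M (fun j => |W (j+1)|) (fun j => |W (j+1) - W j|) (by simp [hW0])
    (by simp [hWlast])


lemma habs' : ∀ (k : ℕ) (z : ℤ), |(-1:ℤ)^k * z| = |z| := fun k z => by
  rw [abs_mul, abs_pow, abs_neg, abs_one, one_pow, one_mul]

lemma sqone (k : ℕ) (z : ℤ) : (-1:ℤ)^k * ((-1:ℤ)^k * z) = z := by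
  rw [← mul_assoc, ← pow_add, show k + k = 2*k from by ring, pow_mul]
  norm_num

lemma perN (β c : ℝ) (hβ : 0 < β) (hcpos : 0 < c) (p : ℤ → ℝ)
    (hp : ∀ k, p k = Real.exp (-(β / 2) * |(k : ℝ)|) / c) (L N : ℕ) (hN : 1 ≤ N)
    (key : ∀ (V : Fin (N+2) → ℤ), V 0 = 0 → V (Fin.last (N+1)) = 0 →
      2 * (∑ i : Fin N, if h : (i:ℕ)+1 < N then
        (if ((-1:ℤ))^(i:ℕ) * V i.succ.castSucc * ((-1:ℤ)^((i:ℕ)+1) * V (⟨(i:ℕ)+1,h⟩ : Fin N).succ.castSucc) < 0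
          then min |(-1:ℤ)^(i:ℕ) * V i.succ.castSucc| |(-1:ℤ)^((i:ℕ)+1) * V (⟨(i:ℕ)+1,h⟩ : Fin N).succ.castSucc|
          else 0) else 0)
      + ∑ i : Fin (N+1), |V i.succ - V i.castSucc|
      = 2 * ∑ i : Fin N, |V i.succ.castSucc|) :
    (∑' l : Fin N → ℤ,
      if (∑ i, |l i|) + (N : ℤ) = (L : ℤ) then
        Real.exp (β * ((∑ i : Fin N, if h : (i : ℕ) + 1 < N then
          (if l i * l ⟨(i : ℕ) + 1, h⟩ < 0 then min |l i| |l ⟨(i : ℕ) + 1, h⟩| else 0)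
          else 0 : ℤ) : ℝ))
      else 0)
    = Real.exp (β * ((L:ℝ) - (N:ℝ))) * c^(N+1) *
      (∑' V : Fin (N + 2) → ℤ,
        if V 0 = 0 ∧ V (Fin.last (N + 1)) = 0 ∧
            (∑ i : Fin N, |V i.succ.castSucc|) = (L : ℤ) - (N : ℤ) then
          ∏ i : Fin (N + 1), p (V i.succ - V i.castSucc)
        else 0) := by
  have hK : Real.exp (β * ((L:ℝ) - (N:ℝ))) * c^(N+1) ≠ 0 :=
    ne_of_gt (mul_pos (Real.exp_pos _) (pow_pos hcpos _))
  have hps : ∀ k, 0 < p k := fun k => by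
    rw [hp]; exact div_pos (Real.exp_pos _) hcpos
  set K := Real.exp (β * ((L:ℝ) - (N:ℝ))) * c^(N+1) with hKdef
  rw [← tsum_mul_left]
  set g : (Fin (N+2) → ℤ) → ℝ := fun V => K *
    (if V 0 = 0 ∧ V (Fin.last (N + 1)) = 0 ∧
            (∑ i : Fin N, |V i.succ.castSucc|) = (L : ℤ) - (N : ℤ) then
          ∏ i : Fin (N + 1), p (V i.succ - V i.castSucc)
        else 0) with hgdef
  have hsupp : ∀ V : Fin (N+2) → ℤ, g V ≠ 0 →
      V 0 = 0 ∧ V (Fin.last (N + 1)) = 0 ∧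
        (∑ i : Fin N, |V i.succ.castSucc|) = (L : ℤ) - (N : ℤ) := by
    intro V hV
    by_contra hcond
    rw [hgdef] at hV
    simp only [if_neg hcond, mul_zero] at hV
    exact hV rfl
  refine tsum_eq_tsum_of_ne_zero_bij
    (fun V => fun j => (-1:ℤ)^(j:ℕ) * (V : Fin (N+2) → ℤ) j.succ.castSucc) ?_ ?_ ?_
  · -- injectivity
    rintro ⟨V, hV⟩ ⟨V', hV'⟩ h
    obtain ⟨c0, clast, -⟩ := hsupp V hV
    obtain ⟨c0', clast', -⟩ := hsupp V' hV'
    refine Subtype.ext (funext fun k => ?_)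
    show V k = V' k
    have hkLt := k.isLt
    rcases Nat.lt_or_ge (k : ℕ) 1 with hk | hk
    · have hk0 : k = 0 := Fin.ext (by simp only [Fin.val_zero]; omega)
      rw [hk0, c0, c0']
    · rcases Nat.lt_or_ge (k : ℕ) (N+1) with hk2 | hk2
      · have hjk : ((⟨(k:ℕ)-1, by omega⟩ : Fin N)).succ.castSucc = k := by
          apply Fin.ext
          show ((k:ℕ)-1)+1 = (k:ℕ)
          omega
        have h' := congrFun h ⟨(k:ℕ)-1, by omega⟩
        simp only at h'
        rw [hjk] at h'
        exact mul_left_cancel₀ (pow_ne_zero _ (by norm_num : (-1:ℤ) ≠ 0)) h'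
      · have hkl : k = Fin.last (N+1) := Fin.ext (show (k:ℕ) = N+1 by omega)
        rw [hkl, clast, clast']
  · -- support f ⊆ range
    intro l hl
    have hcond : (∑ i, |l i|) + (N : ℤ) = (L : ℤ) := by
      by_contra hcond
      simp only [Function.mem_support, if_neg hcond] at hl
      exact hl rfl
    set V : Fin (N+2) → ℤ := fun k =>
      if 1 ≤ (k:ℕ) ∧ (k:ℕ) ≤ N then
        (-1:ℤ)^((k:ℕ)-1) * l ⟨min ((k:ℕ)-1) (N-1), by omega⟩ else 0
      with hVdef
    have hV0 : V 0 = 0 := by simp only [hVdef]; rw [if_neg (by simp)]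
    have hVlast : V (Fin.last (N+1)) = 0 := by
      simp only [hVdef]; rw [if_neg (by simp [Fin.last])]
    have hVmid : ∀ j : Fin N, V j.succ.castSucc = (-1:ℤ)^(j:ℕ) * l j := by
      intro j
      have hval : ((j.succ.castSucc : Fin (N+2)) : ℕ) = (j:ℕ) + 1 := by simp
      have hIsLt := j.isLt
      simp only [hVdef]
      rw [if_pos (by omega)]
      refine congrArg₂ (· * ·) ?_ (congrArg l (Fin.ext ?_))
      · congr 1 <;> omega
      · show min (((j.succ.castSucc : Fin (N+2)) : ℕ)-1) (N-1) = (j:ℕ)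
        omega
    have hVsum : (∑ i : Fin N, |V i.succ.castSucc|) = (L : ℤ) - (N : ℤ) := by
      have h5 : ∀ i : Fin N, |V i.succ.castSucc| = |l i| := fun i => by
        rw [hVmid i, habs']
      rw [Finset.sum_congr rfl (fun i _ => h5 i)]
      omega
    have hcond2 : V 0 = 0 ∧ V (Fin.last (N + 1)) = 0 ∧
        (∑ i : Fin N, |V i.succ.castSucc|) = (L : ℤ) - (N : ℤ) := ⟨hV0, hVlast, hVsum⟩
    have hmem : V ∈ Function.support g := by
      rw [Function.mem_support]
      simp only [hgdef, if_pos hcond2]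
      exact mul_ne_zero hK (ne_of_gt (Finset.prod_pos fun i _ => hps _))
    refine ⟨⟨V, hmem⟩, ?_⟩
    funext j
    simp only
    rw [hVmid j, sqone]
  · -- value equality
    rintro ⟨V, hV⟩
    obtain ⟨c0, clast, csum⟩ := hsupp V hV
    have hcond2 : V 0 = 0 ∧ V (Fin.last (N + 1)) = 0 ∧
        (∑ i : Fin N, |V i.succ.castSucc|) = (L : ℤ) - (N : ℤ) := ⟨c0, clast, csum⟩
    have habsl : ∀ j : Fin N, |(-1:ℤ)^(j:ℕ) * V j.succ.castSucc| = |V j.succ.castSucc| :=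
      fun j => habs' _ _
    have hcondl : (∑ i : Fin N, |(-1:ℤ)^(i:ℕ) * V i.succ.castSucc|) + (N:ℤ) = (L:ℤ) := by
      rw [Finset.sum_congr rfl (fun i _ => habsl i), csum]; ring
    simp only [hgdef, if_pos hcond2]
    rw [if_pos hcondl]
    -- compute the product
    have hprod : (∏ i : Fin (N + 1), p (V i.succ - V i.castSucc))
        = Real.exp (∑ i : Fin (N+1), (-(β/2)) * |((V i.succ - V i.castSucc : ℤ) : ℝ)|) / c^(N+1) := by
      simp only [hp]
      rw [Finset.prod_div_distrib, Finset.prod_const, Finset.card_univ, Fintype.card_fin,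
        Real.exp_sum]
    rw [hprod, hKdef]
    have hc' : (c:ℝ)^(N+1) ≠ 0 := ne_of_gt (pow_pos hcpos _)
    rw [mul_assoc, mul_div_assoc']
    rw [mul_comm (c^(N+1)), mul_div_assoc, div_self hc', mul_one, ← Real.exp_add]
    congr 1
    -- now the exponent identity
    have hkey := key V c0 clast
    set E : ℤ := (∑ i : Fin N, if h : (i:ℕ)+1 < N then
        (if ((-1:ℤ))^(i:ℕ) * V i.succ.castSucc * ((-1:ℤ)^((i:ℕ)+1) * V (⟨(i:ℕ)+1,h⟩ : Fin N).succ.castSucc) < 0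
          then min |(-1:ℤ)^(i:ℕ) * V i.succ.castSucc| |(-1:ℤ)^((i:ℕ)+1) * V (⟨(i:ℕ)+1,h⟩ : Fin N).succ.castSucc|
          else 0) else 0) with hE
    set SU : ℤ := ∑ i : Fin (N+1), |V i.succ - V i.castSucc| with hSU
    have hcast1 : (∑ i : Fin (N+1), (-(β/2)) * |((V i.succ - V i.castSucc : ℤ) : ℝ)|)
        = -(β/2) * (SU : ℝ) := by
      rw [← Finset.mul_sum, hSU]
      push_cast
      ring
    rw [hcast1]
    have h2 : 2 * (E:ℝ) + (SU:ℝ) = 2 * ((L:ℝ) - (N:ℝ)) := by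
      have : 2 * E + SU = 2 * ((L:ℤ) - (N:ℤ)) := by rw [hkey, csum]
      exact_mod_cast this
    have hEr : (E:ℝ) = ((L:ℝ) - (N:ℝ)) - (SU:ℝ)/2 := by linarith
    rw [hEr]
    ring


/-- Random walk representation of the IPDSAW partition function: for `β > 0` and
`L ≥ 1`,
`Z_{L,β} = c_β e^{βL} Σ_{N=1}^L Γ_β^N P_β(V_{N+1} = 0, Σ_{i=1}^N |V_i| = L-N)`,
where the walk `V` starts at `0`, has i.i.d. increments with the discrete Laplace
law `p(k) = e^{-(β/2)|k|}/c_β`, `c_β` is the normalizing constant and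
`Γ_β = c_β e^{-β}`. The probability of the walk event is written as the sum over
all walk trajectories `(V_0, …, V_{N+1})` of the product of the densities of the
increments. -/
theorem ipdsaw_random_walk_representation (β : ℝ) (hβ : 0 < β) (L : ℕ) (hL : 1 ≤ L)
    (c : ℝ) (hc : c = ∑' k : ℤ, Real.exp (-(β / 2) * |(k : ℝ)|))
    (Γ : ℝ) (hΓ : Γ = c * Real.exp (-β))
    (p : ℤ → ℝ) (hp : ∀ k, p k = Real.exp (-(β / 2) * |(k : ℝ)|) / c)
    (Z : ℝ)
    (hZ : Z = ∑ N ∈ Finset.Icc 1 L, ∑' l : Fin N → ℤ,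
      if (∑ i, |l i|) + (N : ℤ) = (L : ℤ) then
        Real.exp (β * ((∑ i : Fin N, if h : (i : ℕ) + 1 < N then
          (if l i * l ⟨(i : ℕ) + 1, h⟩ < 0 then min |l i| |l ⟨(i : ℕ) + 1, h⟩| else 0)
          else 0 : ℤ) : ℝ))
      else 0)
    (prob : ℕ → ℝ)
    (hprob : ∀ N, prob N = ∑' V : Fin (N + 2) → ℤ,
      if V 0 = 0 ∧ V (Fin.last (N + 1)) = 0 ∧
          (∑ i : Fin N, |V i.succ.castSucc|) = (L : ℤ) - (N : ℤ) then
        ∏ i : Fin (N + 1), p (V i.succ - V i.castSucc)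
      else 0) :
    Z = c * Real.exp (β * L) * ∑ N ∈ Finset.Icc 1 L, Γ ^ N * prob N := by
  -- positivity of the normalizing constant
  have hr1 : Real.exp (-(β/2)) < 1 := Real.exp_lt_one_iff.mpr (by linarith)
  have hgeo : Summable (fun n : ℕ => Real.exp (-(β/2)) ^ n) :=
    summable_geometric_of_lt_one (Real.exp_pos _).le hr1
  have hsum : Summable (fun k : ℤ => Real.exp (-(β / 2) * |(k : ℝ)|)) := by
    refine Summable.of_nat_of_neg (hgeo.congr fun n => ?_) (hgeo.congr fun n => ?_)
    · rw [← Real.exp_nat_mul]; congr 1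
      push_cast; rw [abs_of_nonneg (by positivity : (0:ℝ) ≤ (n:ℝ))]; ring
    · rw [← Real.exp_nat_mul]; congr 1
      push_cast; rw [abs_neg, abs_of_nonneg (by positivity : (0:ℝ) ≤ (n:ℝ))]; ring
  have hcpos : 0 < c := by
    have h1 : Real.exp (-(β / 2) * |((0:ℤ) : ℝ)|) ≤ c := by
      rw [hc]; exact Summable.le_tsum hsum 0 fun j _ => (Real.exp_pos _).le
    simp only [Int.cast_zero, abs_zero, mul_zero, Real.exp_zero] at h1
    linarith
  rw [hZ, Finset.mul_sum]
  refine Finset.sum_congr rfl fun N hNmem => ?_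
  obtain ⟨hN1, hN2⟩ := Finset.mem_Icc.mp hNmem
  obtain ⟨M, rfl⟩ : ∃ M, N = M + 1 := ⟨N - 1, by omega⟩
  rw [perN β c hβ hcpos p hp L (M+1) (by omega) (fun V h0 hl => key M V h0 hl),
    ← hprob (M+1)]
  have e : Real.exp (β * ((L:ℝ) - ((M+1:ℕ):ℝ)))
      = Real.exp (β * L) * Real.exp (-β) ^ (M+1) := by
    rw [← Real.exp_nat_mul, ← Real.exp_add]; congr 1; push_cast; ring
  rw [e, hΓ, mul_pow]
  ring
end

section
/- For every β ≥ 0, the limit f(β) := lim_{L→∞} (1/L) log Z_{L,β} exists, where Z_{L,β} is the IPDSAW partition function. Moreover f(β) ≥ β for all β ≥ 0. -/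
open Filter Topology

noncomputable section IpdsawAux
namespace IpdsawAux

def phi (x y : ℤ) : ℤ := if x * y < 0 then min |x| |y| else 0

lemma phi_nonneg (x y : ℤ) : 0 ≤ phi x y := by
  unfold phi; split
  · exact le_min (abs_nonneg _) (abs_nonneg _)
  · exact le_refl 0

lemma phi_le (x y : ℤ) : phi x y ≤ |y| := by
  unfold phi; split
  · exact min_le_right _ _
  · exact abs_nonneg _

def Hn (N : ℕ) (w : ℕ → ℤ) : ℤ :=
  ∑ i ∈ Finset.range N, if i + 1 < N then phi (w i) (w (i+1)) else 0

lemma Hn_congr {N : ℕ} {w w' : ℕ → ℤ} (h : ∀ i < N, w i = w' i) : Hn N w = Hn N w' := by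
  unfold Hn
  apply Finset.sum_congr rfl
  intro i hi
  rw [Finset.mem_range] at hi
  by_cases h1 : i + 1 < N
  · rw [if_pos h1, if_pos h1, h i hi, h (i+1) h1]
  · rw [if_neg h1, if_neg h1]

def ext {N : ℕ} (l : Fin N → ℤ) : ℕ → ℤ := fun i => if h : i < N then l ⟨i, h⟩ else 0

lemma ext_coe {N : ℕ} (l : Fin N → ℤ) (i : Fin N) : ext l i.1 = l i := by
  simp [ext, i.2]

lemma ext_ge {N : ℕ} (l : Fin N → ℤ) {i : ℕ} (h : N ≤ i) : ext l i = 0 := by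
  simp [ext, Nat.not_lt.mpr h]

lemma H_eq {N : ℕ} (l : Fin N → ℤ) :
    (∑ i : Fin N, if h : (i : ℕ) + 1 < N then
      (if l i * l ⟨(i : ℕ) + 1, h⟩ < 0 then min |l i| |l ⟨(i : ℕ) + 1, h⟩| else 0)
      else 0 : ℤ) = Hn N (ext l) := by
  unfold Hn
  rw [← Fin.sum_univ_eq_sum_range (fun i => if i + 1 < N then phi (ext l i) (ext l (i+1)) else 0) N]
  apply Finset.sum_congr rfl
  intro i _
  by_cases h1 : (i : ℕ) + 1 < N
  · rw [dif_pos h1, if_pos h1]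
    have e1 : ext l (i : ℕ) = l i := ext_coe l i
    have e2 : ext l ((i : ℕ) + 1) = l ⟨(i:ℕ)+1, h1⟩ := by
      show ext l ((⟨(i:ℕ)+1, h1⟩ : Fin N) : ℕ) = _
      exact ext_coe l _
    rw [phi, e1, e2]
  · rw [dif_neg h1, if_neg h1]

lemma sum_abs_ext {N : ℕ} (l : Fin N → ℤ) :
    ∑ i ∈ Finset.range N, |ext l i| = ∑ i : Fin N, |l i| := by
  rw [← Fin.sum_univ_eq_sum_range (fun i => |ext l i|) N]
  exact Finset.sum_congr rfl fun i _ => by rw [ext_coe]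

lemma ext_append_lt {N1 N2 : ℕ} (l : Fin N1 → ℤ) (l' : Fin N2 → ℤ) {i : ℕ} (h : i < N1) :
    ext (Fin.append l l') i = ext l i := by
  have h2 : i < N1 + N2 := by omega
  rw [ext, ext, dif_pos h2, dif_pos h]
  rw [show (⟨i, h2⟩ : Fin (N1 + N2)) = Fin.castAdd N2 ⟨i, h⟩ from rfl, Fin.append_left]

lemma ext_append_ge {N1 N2 : ℕ} (l : Fin N1 → ℤ) (l' : Fin N2 → ℤ) (j : ℕ) :
    ext (Fin.append l l') (N1 + j) = ext l' j := by
  by_cases h : j < N2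
  · have h2 : N1 + j < N1 + N2 := by omega
    rw [ext, ext, dif_pos h2, dif_pos h]
    rw [show (⟨N1 + j, h2⟩ : Fin (N1 + N2)) = Fin.natAdd N1 ⟨j, h⟩ from rfl, Fin.append_right]
  · rw [ext, ext, dif_neg (by omega), dif_neg h]

lemma Hn_add (N1 N2 : ℕ) (hN2 : 1 ≤ N2) (w : ℕ → ℤ) :
    Hn N1 w + Hn N2 (fun j => w (N1 + j)) ≤ Hn (N1 + N2) w := by
  unfold Hn
  rw [Finset.sum_range_add]
  gcongr with i hi i hi
  · rw [Finset.mem_range] at hi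
    have h2 : i + 1 < N1 + N2 := by omega
    rw [if_pos h2]
    by_cases h1 : i + 1 < N1
    · rw [if_pos h1]
    · rw [if_neg h1]; exact phi_nonneg _ _
  · by_cases h1 : i + 1 < N2
    · rw [if_pos h1, if_pos (by omega : N1 + i + 1 < N1 + N2)]
      have : N1 + i + 1 = N1 + (i + 1) := by omega
      rw [this]
    · rw [if_neg h1, if_neg (by omega : ¬ N1 + i + 1 < N1 + N2)]

def conf (N L : ℕ) : Finset (Fin N → ℤ) :=
  (Fintype.piFinset fun _ : Fin N => Finset.Icc (-(L:ℤ)) L).filter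
    (fun l => (∑ i, |l i|) + (N:ℤ) = (L:ℤ))

lemma mem_conf {N L : ℕ} {l : Fin N → ℤ} :
    l ∈ conf N L ↔ (∑ i, |l i|) + (N:ℤ) = (L:ℤ) := by
  constructor
  · intro h; exact (Finset.mem_filter.mp h).2
  · intro h
    refine Finset.mem_filter.mpr ⟨?_, h⟩
    rw [Fintype.mem_piFinset]
    intro i
    have h1 : |l i| ≤ ∑ j, |l j| :=
      Finset.single_le_sum (f := fun j => |l j|) (fun j _ => abs_nonneg _) (Finset.mem_univ i)
    have h2 : (∑ j, |l j|) ≤ (L:ℤ) := by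
      have : (0:ℤ) ≤ N := Int.natCast_nonneg N
      omega
    rw [Finset.mem_Icc]
    constructor
    · have := abs_nonneg (l i); have := neg_abs_le (l i); omega
    · have := le_abs_self (l i); omega

def ZS (β : ℝ) (L : ℕ) : ℝ :=
  ∑ N ∈ Finset.Icc 1 L, ∑ l ∈ conf N L, Real.exp (β * (Hn N (ext l) : ℝ))

lemma ZS_zero (β : ℝ) : ZS β 0 = 0 := by simp [ZS]

lemma ZS_ge_one (β : ℝ) {L : ℕ} (hL : 1 ≤ L) : 1 ≤ ZS β L := by
  have h1 : (fun _ : Fin 1 => ((L:ℤ) - 1)) ∈ conf 1 L := by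
    rw [mem_conf]
    have hL' : (1:ℤ) ≤ (L:ℤ) := by exact_mod_cast hL
    rw [Fin.sum_univ_one, abs_of_nonneg (by omega : (0:ℤ) ≤ (L:ℤ)-1)]
    push_cast
    ring
  have hH : Hn 1 (ext (fun _ : Fin 1 => ((L:ℤ) - 1))) = 0 := by
    unfold Hn; simp
  have step1 : Real.exp (β * (Hn 1 (ext (fun _ : Fin 1 => ((L:ℤ) - 1))) : ℝ)) ≤
      ∑ l ∈ conf 1 L, Real.exp (β * (Hn 1 (ext l) : ℝ)) :=
    Finset.single_le_sum (f := fun l => Real.exp (β * (Hn 1 (ext l) : ℝ)))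
      (fun _ _ => (Real.exp_pos _).le) h1
  have step2 : (∑ l ∈ conf 1 L, Real.exp (β * (Hn 1 (ext l) : ℝ))) ≤ ZS β L := by
    apply Finset.single_le_sum (f := fun N => ∑ l ∈ conf N L, Real.exp (β * (Hn N (ext l) : ℝ)))
      (fun _ _ => Finset.sum_nonneg fun _ _ => (Real.exp_pos _).le)
    rw [Finset.mem_Icc]; exact ⟨le_refl 1, hL⟩
  calc (1:ℝ) = Real.exp (β * ((0:ℤ) : ℝ)) := by simp
    _ ≤ _ := by rw [← hH] at *; exact le_trans step1 step2

lemma ZS_pos (β : ℝ) {L : ℕ} (hL : 1 ≤ L) : 0 < ZS β L :=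
  lt_of_lt_of_le one_pos (ZS_ge_one β hL)

lemma psum_inj (v : ℕ → ℤ) {k k' : ℕ}
    (h : (∑ i ∈ Finset.range k, |v i|) + (k:ℤ) = (∑ i ∈ Finset.range k', |v i|) + (k':ℤ)) :
    k = k' := by
  have sm : StrictMono (fun k : ℕ => (∑ i ∈ Finset.range k, |v i|) + (k:ℤ)) := by
    apply strictMono_nat_of_lt_succ
    intro n
    rw [Finset.sum_range_succ]
    have := abs_nonneg (v n)
    push_cast
    linarith
  exact sm.injective h

lemma heq_ext {A B : ℕ} {f : Fin A → ℤ} {g : Fin B → ℤ} (h : A = B) (hfg : HEq f g) :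
    ext f = ext g := by
  subst h
  rw [heq_iff_eq] at hfg
  rw [hfg]

lemma ZS_eq_sigma (β : ℝ) (L : ℕ) :
    ZS β L = ∑ q ∈ (Finset.Icc 1 L).sigma (fun N => conf N L),
      Real.exp (β * (Hn q.1 (ext q.2) : ℝ)) :=
  Finset.sum_sigma' _ _ _

lemma ZS_superadd (β : ℝ) (hβ : 0 ≤ β) {a b : ℕ} :
    ZS β a * ZS β b ≤ ZS β (a + b) := by
  classical
  set f : (N : ℕ) × (Fin N → ℤ) → ℝ := fun q => Real.exp (β * (Hn q.1 (ext q.2) : ℝ)) with hf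
  set P := ((Finset.Icc 1 a).sigma (fun N => conf N a)) ×ˢ
    ((Finset.Icc 1 b).sigma (fun N => conf N b)) with hP
  set e : ((N : ℕ) × (Fin N → ℤ)) × ((N : ℕ) × (Fin N → ℤ)) → (N : ℕ) × (Fin N → ℤ) :=
    fun p => ⟨p.1.1 + p.2.1, Fin.append p.1.2 p.2.2⟩ with he
  have step1 : ZS β a * ZS β b = ∑ p ∈ P, f p.1 * f p.2 := by
    rw [ZS_eq_sigma, ZS_eq_sigma, Finset.sum_mul_sum, ← Finset.sum_product']
  rw [step1, ZS_eq_sigma]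
  have key : ∀ p ∈ P, f p.1 * f p.2 ≤ f (e p) := by
    rintro ⟨⟨N1, l⟩, ⟨N2, l'⟩⟩ hp
    rw [Finset.mem_product, Finset.mem_sigma, Finset.mem_sigma] at hp
    have hN2 : 1 ≤ N2 := (Finset.mem_Icc.mp hp.2.1).1
    simp only [hf, he]
    rw [← Real.exp_add, ← mul_add]
    apply Real.exp_le_exp.mpr
    apply mul_le_mul_of_nonneg_left _ hβ
    have hc1 : Hn N1 (ext (Fin.append l l')) = Hn N1 (ext l) :=
      Hn_congr fun i hi => ext_append_lt l l' hi
    have hc2 : Hn N2 (fun j => ext (Fin.append l l') (N1 + j)) = Hn N2 (ext l') :=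
      Hn_congr fun i _ => ext_append_ge l l' i
    have := Hn_add N1 N2 hN2 (ext (Fin.append l l'))
    rw [hc1, hc2] at this
    exact_mod_cast this
  have hinj : ∀ p ∈ P, ∀ p' ∈ P, e p = e p' → p = p' := by
    rintro ⟨⟨N1, l⟩, ⟨N2, l'⟩⟩ hp ⟨⟨M1, m⟩, ⟨M2, m'⟩⟩ hp' hep
    rw [Finset.mem_product, Finset.mem_sigma, Finset.mem_sigma] at hp hp'
    simp only [he] at hep
    obtain ⟨hN, hA⟩ := Sigma.ext_iff.mp hep
    dsimp only at hN hA
    have hv : ext (Fin.append l l') = ext (Fin.append m m') := heq_ext hN hA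
    have s1 : (∑ i ∈ Finset.range N1, |ext (Fin.append l l') i|) + (N1:ℤ) = (a:ℤ) := by
      rw [show (∑ i ∈ Finset.range N1, |ext (Fin.append l l') i|)
          = ∑ i ∈ Finset.range N1, |ext l i| from Finset.sum_congr rfl fun i hi => by
            rw [ext_append_lt l l' (Finset.mem_range.mp hi)],
        sum_abs_ext]
      exact mem_conf.mp hp.1.2
    have s2 : (∑ i ∈ Finset.range M1, |ext (Fin.append l l') i|) + (M1:ℤ) = (a:ℤ) := by
      rw [hv]
      rw [show (∑ i ∈ Finset.range M1, |ext (Fin.append m m') i|)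
          = ∑ i ∈ Finset.range M1, |ext m i| from Finset.sum_congr rfl fun i hi => by
            rw [ext_append_lt m m' (Finset.mem_range.mp hi)],
        sum_abs_ext]
      exact mem_conf.mp hp'.1.2
    have hN1 : N1 = M1 := psum_inj _ (s1.trans s2.symm)
    subst hN1
    have hN2 : N2 = M2 := by omega
    subst hN2
    have hl : l = m := by
      funext i
      have := congrFun hv i.1
      rw [ext_append_lt l l' i.2, ext_append_lt m m' i.2, ext_coe, ext_coe] at this
      exact this
    have hl' : l' = m' := by
      funext j
      have := congrFun hv (N1 + j.1)
      rw [ext_append_ge l l' j.1, ext_append_ge m m' j.1, ext_coe, ext_coe] at this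
      exact this
    subst hl; subst hl'
    rfl
  calc ∑ p ∈ P, f p.1 * f p.2 ≤ ∑ p ∈ P, f (e p) := Finset.sum_le_sum key
    _ = ∑ q ∈ P.image e, f q := (Finset.sum_image hinj).symm
    _ ≤ _ := by
      apply Finset.sum_le_sum_of_subset_of_nonneg
      · intro q hq
        rw [Finset.mem_image] at hq
        obtain ⟨p, hp, rfl⟩ := hq
        obtain ⟨⟨N1, l⟩, ⟨N2, l'⟩⟩ := p
        rw [Finset.mem_product, Finset.mem_sigma, Finset.mem_sigma] at hp
        dsimp only at hp
        simp only [he]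
        rw [Finset.mem_sigma]
        dsimp only
        have h1 := Finset.mem_Icc.mp hp.1.1
        have h2 := Finset.mem_Icc.mp hp.2.1
        constructor
        · rw [Finset.mem_Icc]; constructor <;> omega
        · rw [mem_conf]
          have c1 := mem_conf.mp hp.1.2
          have c2 := mem_conf.mp hp.2.2
          have : (∑ i, |Fin.append l l' i|) = (∑ i, |l i|) + (∑ i, |l' i|) := by
            rw [Fin.sum_univ_add]
            congr 1
            · exact Finset.sum_congr rfl fun i _ => by rw [Fin.append_left]
            · exact Finset.sum_congr rfl fun i _ => by rw [Fin.append_right]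
          rw [this]
          push_cast
          push_cast at c1 c2
          linarith
      · intro q _ _
        exact (Real.exp_pos _).le

lemma geom (c : ℕ) :
    ∑ j ∈ Finset.Icc (-(c:ℤ)) (c:ℤ), ((2:ℝ))⁻¹ ^ j.natAbs ≤ 3 - 2 * (2⁻¹)^c := by
  induction c with
  | zero => norm_num
  | succ c ih =>
    have hins : Finset.Icc (-((c+1:ℕ)):ℤ) ((c+1:ℕ):ℤ)
        = insert (-((c:ℤ)+1)) (insert ((c:ℤ)+1) (Finset.Icc (-(c:ℤ)) (c:ℤ))) := by
      ext x
      simp only [Finset.mem_Icc, Finset.mem_insert]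
      push_cast
      omega
    have hn1 : ((c:ℤ)+1) ∉ Finset.Icc (-(c:ℤ)) (c:ℤ) := by
      rw [Finset.mem_Icc]; omega
    have hn2 : (-((c:ℤ)+1)) ∉ insert ((c:ℤ)+1) (Finset.Icc (-(c:ℤ)) (c:ℤ)) := by
      rw [Finset.mem_insert, Finset.mem_Icc]; omega
    rw [hins, Finset.sum_insert hn2, Finset.sum_insert hn1]
    have e1 : (-((c:ℤ)+1)).natAbs = c + 1 := by
      rw [Int.natAbs_neg]; exact_mod_cast Int.natAbs_natCast (c+1)
    have e2 : ((c:ℤ)+1).natAbs = c + 1 := by exact_mod_cast Int.natAbs_natCast (c+1)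
    rw [e1, e2]
    have hp : ((2:ℝ))⁻¹ ^ (c+1) = (2⁻¹)^c * 2⁻¹ := pow_succ _ _
    rw [hp]
    linarith

lemma card_conf_le (N L : ℕ) : ((conf N L).card : ℝ) ≤ 3^N * 2^L := by
  classical
  have key : ∀ l ∈ conf N L, (∑ i, (l i).natAbs) + N = L := by
    intro l hl
    have h := (Finset.mem_filter.mp hl).2
    have hcast : ((∑ i, (l i).natAbs : ℕ) : ℤ) = ∑ i, |l i| := by
      push_cast
      rfl
    exact_mod_cast hcast ▸ h
  have h1 : ((conf N L).card : ℝ) * (2⁻¹)^(L-N)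
      = ∑ l ∈ conf N L, ∏ i, ((2:ℝ))⁻¹^((l i).natAbs) := by
    rw [Finset.sum_congr rfl (fun l hl => ?_), Finset.sum_const, nsmul_eq_mul]
    rw [Finset.prod_pow_eq_pow_sum]
    congr 1
    have := key l hl
    omega
  have h2 : ∑ l ∈ conf N L, ∏ i, ((2:ℝ))⁻¹^((l i).natAbs)
      ≤ ∑ l ∈ Fintype.piFinset (fun _ : Fin N => Finset.Icc (-(L:ℤ)) L),
          ∏ i, ((2:ℝ))⁻¹^((l i).natAbs) := by
    apply Finset.sum_le_sum_of_subset_of_nonneg (Finset.filter_subset _ _)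
    intro l _ _
    positivity
  have h3 : ∑ l ∈ Fintype.piFinset (fun _ : Fin N => Finset.Icc (-(L:ℤ)) L),
        ∏ i, ((2:ℝ))⁻¹^((l i).natAbs)
      = ∏ _i : Fin N, ∑ j ∈ Finset.Icc (-(L:ℤ)) (L:ℤ), ((2:ℝ))⁻¹^(j.natAbs) :=
    (Finset.prod_univ_sum (fun _ : Fin N => Finset.Icc (-(L:ℤ)) (L:ℤ))
      (fun _ j => ((2:ℝ))⁻¹^(j.natAbs))).symm
  have h4 : ∏ _i : Fin N, ∑ j ∈ Finset.Icc (-(L:ℤ)) (L:ℤ), ((2:ℝ))⁻¹^(j.natAbs)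
      ≤ (3:ℝ)^N := by
    rw [Finset.prod_const, Finset.card_univ, Fintype.card_fin]
    apply pow_le_pow_left₀ _ _ N
    · apply Finset.sum_nonneg; intro j _; positivity
    · refine le_trans (geom L) ?_
      have : (0:ℝ) ≤ (2⁻¹)^L := by positivity
      linarith
  have hfin : ((conf N L).card : ℝ) * (2⁻¹)^(L-N) ≤ 3^N := by
    rw [h1]
    exact le_trans h2 ((le_of_eq h3).trans h4)
  have hpow : ((conf N L).card : ℝ) = (((conf N L).card : ℝ) * (2⁻¹)^(L-N)) * 2^(L-N) := by
    rw [mul_assoc, inv_pow, inv_mul_cancel₀ (by positivity), mul_one]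
  rw [hpow]
  calc (((conf N L).card : ℝ) * (2⁻¹)^(L-N)) * 2^(L-N)
      ≤ (3:ℝ)^N * 2^(L-N) := by
        apply mul_le_mul_of_nonneg_right hfin (by positivity)
    _ ≤ 3^N * 2^L := by
        apply mul_le_mul_of_nonneg_left _ (by positivity)
        exact pow_le_pow_right₀ (by norm_num) (Nat.sub_le _ _)

lemma Hn_ext_le {N : ℕ} (l : Fin N → ℤ) : Hn N (ext l) ≤ ∑ i : Fin N, |l i| := by
  have h1 : Hn N (ext l) ≤ ∑ i ∈ Finset.range N, |ext l (i+1)| := by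
    apply Finset.sum_le_sum
    intro i _
    split
    · exact phi_le _ _
    · exact abs_nonneg _
  have h2 : (∑ i ∈ Finset.range N, |ext l (i+1)|) + |ext l 0|
      = ∑ i ∈ Finset.range (N+1), |ext l i| :=
    (Finset.sum_range_succ' (fun i => |ext l i|) N).symm
  have h3 : ∑ i ∈ Finset.range (N+1), |ext l i| = ∑ i ∈ Finset.range N, |ext l i| := by
    rw [Finset.sum_range_succ, ext_ge l (le_refl N)]
    simp
  have h4 := sum_abs_ext l
  have h5 := abs_nonneg (ext l 0)
  linarith

def zig (k : ℕ) : Fin k → ℤ := fun i => if Even i.1 then (k:ℤ) else -(k:ℤ)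

lemma zig_abs (k : ℕ) (i : Fin k) : |zig k i| = (k:ℤ) := by
  unfold zig
  split
  · exact abs_of_nonneg (Int.natCast_nonneg k)
  · rw [abs_neg]; exact abs_of_nonneg (Int.natCast_nonneg k)

lemma zig_mem (k : ℕ) : zig k ∈ conf k (k*(k+1)) := by
  rw [mem_conf]
  rw [Finset.sum_congr rfl (fun i _ => zig_abs k i), Finset.sum_const,
    Finset.card_univ, Fintype.card_fin, nsmul_eq_mul]
  push_cast
  ring

lemma zig_H (k : ℕ) (hk : 1 ≤ k) : Hn k (ext (zig k)) = ((k:ℤ) - 1) * k := by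
  have hterm : ∀ i ∈ Finset.range k,
      (if i + 1 < k then phi (ext (zig k) i) (ext (zig k) (i+1)) else 0)
        = if i + 1 < k then (k:ℤ) else 0 := by
    intro i hi
    rw [Finset.mem_range] at hi
    by_cases h1 : i + 1 < k
    · rw [if_pos h1, if_pos h1]
      have e1 : ext (zig k) i = zig k ⟨i, hi⟩ := by
        show ext (zig k) ((⟨i, hi⟩ : Fin k) : ℕ) = _; exact ext_coe _ _
      have e2 : ext (zig k) (i+1) = zig k ⟨i+1, h1⟩ := by
        show ext (zig k) ((⟨i+1, h1⟩ : Fin k) : ℕ) = _; exact ext_coe _ _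
      rw [e1, e2]
      have hkpos : (0:ℤ) < (k:ℤ) := by exact_mod_cast hk
      rcases Nat.even_or_odd i with he | ho
      · have ho1 : ¬ Even (i+1) := by simp [Nat.even_add_one, he]
        rw [zig, zig]
        simp only [if_pos he, if_neg ho1]
        rw [phi, if_pos (by nlinarith : (k:ℤ) * -(k:ℤ) < 0)]
        rw [abs_neg, abs_of_nonneg hkpos.le, min_self]
      · have he1 : Even (i+1) := ho.add_one
        have hne : ¬ Even i := Nat.not_even_iff_odd.mpr ho
        rw [zig, zig]
        simp only [if_neg hne, if_pos he1]
        rw [phi, if_pos (by nlinarith : -(k:ℤ) * (k:ℤ) < 0)]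
        rw [abs_neg, abs_of_nonneg hkpos.le, min_self]
    · rw [if_neg h1, if_neg h1]
  rw [Hn, Finset.sum_congr rfl hterm, ← Finset.sum_filter]
  have hfil : (Finset.range k).filter (fun i => i + 1 < k) = Finset.range (k-1) := by
    ext i
    simp only [Finset.mem_filter, Finset.mem_range]
    omega
  rw [hfil, Finset.sum_const, Finset.card_range, nsmul_eq_mul]
  have : ((k - 1 : ℕ) : ℤ) = (k:ℤ) - 1 := by omega
  rw [this]

lemma ZS_zig (β : ℝ) (k : ℕ) (hk : 1 ≤ k) :
    Real.exp (β * (((k:ℝ) - 1) * k)) ≤ ZS β (k*(k+1)) := by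
  have hH : (Hn k (ext (zig k)) : ℝ) = ((k:ℝ) - 1) * k := by
    rw [zig_H k hk]; push_cast; ring
  have hmem : zig k ∈ conf k (k*(k+1)) := zig_mem k
  have step1 : Real.exp (β * (Hn k (ext (zig k)) : ℝ))
      ≤ ∑ l ∈ conf k (k*(k+1)), Real.exp (β * (Hn k (ext l) : ℝ)) :=
    Finset.single_le_sum (f := fun l => Real.exp (β * (Hn k (ext l) : ℝ)))
      (fun _ _ => (Real.exp_pos _).le) hmem
  have step2 : (∑ l ∈ conf k (k*(k+1)), Real.exp (β * (Hn k (ext l) : ℝ))) ≤ ZS β (k*(k+1)) := by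
    apply Finset.single_le_sum
      (f := fun N => ∑ l ∈ conf N (k*(k+1)), Real.exp (β * (Hn N (ext l) : ℝ)))
      (fun _ _ => Finset.sum_nonneg fun _ _ => (Real.exp_pos _).le)
    rw [Finset.mem_Icc]
    constructor
    · exact hk
    · exact Nat.le_mul_of_pos_right k (by omega)
  rw [← hH]
  exact le_trans step1 step2

lemma ZS_log_le (β : ℝ) (hβ : 0 ≤ β) {L : ℕ} (hL : 1 ≤ L) :
    Real.log (ZS β L) ≤ (β + Real.log 6 + 1) * L := by
  have hterm : ∀ N ∈ Finset.Icc 1 L, ∀ l ∈ conf N L,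
      Real.exp (β * (Hn N (ext l) : ℝ)) ≤ Real.exp (β * L) := by
    intro N hN l hl
    apply Real.exp_le_exp.mpr
    apply mul_le_mul_of_nonneg_left _ hβ
    have h1 := Hn_ext_le l
    have h2 := mem_conf.mp hl
    have h3 : Hn N (ext l) ≤ (L:ℤ) := by
      have : (0:ℤ) ≤ (N:ℤ) := Int.natCast_nonneg N
      omega
    exact_mod_cast h3
  have hinner : ∀ N ∈ Finset.Icc 1 L,
      (∑ l ∈ conf N L, Real.exp (β * (Hn N (ext l) : ℝ))) ≤ (6:ℝ)^L * Real.exp (β * L) := by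
    intro N hN
    have hNL : N ≤ L := (Finset.mem_Icc.mp hN).2
    calc (∑ l ∈ conf N L, Real.exp (β * (Hn N (ext l) : ℝ)))
        ≤ ∑ _l ∈ conf N L, Real.exp (β * L) := Finset.sum_le_sum (hterm N hN)
      _ = ((conf N L).card : ℝ) * Real.exp (β * L) := by
          rw [Finset.sum_const, nsmul_eq_mul]
      _ ≤ (3^N * 2^L) * Real.exp (β * L) := by
          apply mul_le_mul_of_nonneg_right (card_conf_le N L) (Real.exp_pos _).le
      _ ≤ (6:ℝ)^L * Real.exp (β * L) := by
          apply mul_le_mul_of_nonneg_right _ (Real.exp_pos _).le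
          calc (3:ℝ)^N * 2^L ≤ 3^L * 2^L := by
                apply mul_le_mul_of_nonneg_right _ (by positivity)
                exact pow_le_pow_right₀ (by norm_num) hNL
            _ = 6^L := by rw [← mul_pow]; norm_num
  have hZle : ZS β L ≤ (L:ℝ) * ((6:ℝ)^L * Real.exp (β * L)) := by
    calc ZS β L ≤ ∑ _N ∈ Finset.Icc 1 L, (6:ℝ)^L * Real.exp (β * L) :=
          Finset.sum_le_sum hinner
      _ = (L:ℝ) * ((6:ℝ)^L * Real.exp (β * L)) := by
          rw [Finset.sum_const, nsmul_eq_mul, Nat.card_Icc]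
          norm_num
  have hLpos : (0:ℝ) < L := by exact_mod_cast hL
  have hZpos : (0:ℝ) < ZS β L := ZS_pos β hL
  calc Real.log (ZS β L) ≤ Real.log ((L:ℝ) * ((6:ℝ)^L * Real.exp (β * L))) :=
        Real.log_le_log hZpos hZle
    _ = Real.log L + ((L:ℝ) * Real.log 6 + β * L) := by
        rw [Real.log_mul (ne_of_gt hLpos) (by positivity), Real.log_mul (by positivity)
          (Real.exp_pos _).ne', Real.log_pow, Real.log_exp]
    _ ≤ (β + Real.log 6 + 1) * L := by
        have := Real.log_le_sub_one_of_pos hLpos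
        nlinarith [Real.log_nonneg (by norm_num : (1:ℝ) ≤ 6)]

lemma tsum_eq_conf (β : ℝ) (N L : ℕ) :
    (∑' l : Fin N → ℤ,
      if (∑ i, |l i|) + (N : ℤ) = (L : ℤ) then
        Real.exp (β * ((∑ i : Fin N, if h : (i : ℕ) + 1 < N then
          (if l i * l ⟨(i : ℕ) + 1, h⟩ < 0 then min |l i| |l ⟨(i : ℕ) + 1, h⟩| else 0)
          else 0 : ℤ) : ℝ))
      else 0)
    = ∑ l ∈ conf N L, Real.exp (β * (Hn N (ext l) : ℝ)) := by
  classical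
  rw [tsum_eq_sum (s := Fintype.piFinset fun _ : Fin N => Finset.Icc (-(L:ℤ)) L)
    (fun l hl => ?_)]
  · rw [conf, Finset.sum_filter]
    apply Finset.sum_congr rfl
    intro l _
    by_cases hc : (∑ i, |l i|) + (N : ℤ) = (L : ℤ)
    · rw [if_pos hc, if_pos hc, H_eq l]
    · rw [if_neg hc, if_neg hc]
  · apply if_neg
    intro hc
    exact hl ((Finset.filter_subset _ _) (mem_conf.mpr hc))

end IpdsawAux
end IpdsawAux

/-- For every `β ≥ 0` the free energy `f(β) = lim_{L→∞} (1/L) log Z_{L,β}` of the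
IPDSAW exists, and `f(β) ≥ β`. Here
`Z_{L,β} = Σ_{N=1}^L Σ_{l ∈ L_{N,L}} exp(β H_L(l))` with
`L_{N,L} = {l ∈ ℤ^N : Σ|l_n| + N = L}` and
`H_L(l) = Σ_{n=1}^{N-1} min(|l_n|,|l_{n+1}|) 1_{l_n l_{n+1} < 0}`. -/
theorem ipdsaw_free_energy_exists (β : ℝ) (hβ : 0 ≤ β)
    (Z : ℕ → ℝ)
    (hZ : ∀ L : ℕ, Z L = ∑ N ∈ Finset.Icc 1 L, ∑' l : Fin N → ℤ,
      if (∑ i, |l i|) + (N : ℤ) = (L : ℤ) then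
        Real.exp (β * ((∑ i : Fin N, if h : (i : ℕ) + 1 < N then
          (if l i * l ⟨(i : ℕ) + 1, h⟩ < 0 then min |l i| |l ⟨(i : ℕ) + 1, h⟩| else 0)
          else 0 : ℤ) : ℝ))
      else 0) :
    ∃ f : ℝ, Tendsto (fun L : ℕ => Real.log (Z L) / L) atTop (𝓝 f) ∧ β ≤ f := by
  classical
  have hZS : ∀ L : ℕ, Z L = IpdsawAux.ZS β L := by
    intro L
    rw [hZ L, IpdsawAux.ZS]
    exact Finset.sum_congr rfl fun N _ => IpdsawAux.tsum_eq_conf β N L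
  set u : ℕ → ℝ := fun L => Real.log (IpdsawAux.ZS β L) with hu
  have hu0 : u 0 = 0 := by
    rw [hu]; simp [IpdsawAux.ZS_zero, Real.log_zero]
  have hsub : Subadditive (fun n => -u n) := by
    intro m n
    rcases Nat.eq_zero_or_pos m with rfl | hm
    · simp [hu0]
    rcases Nat.eq_zero_or_pos n with rfl | hn
    · simp [hu0]
    have hm' : 0 < IpdsawAux.ZS β m := IpdsawAux.ZS_pos β hm
    have hn' : 0 < IpdsawAux.ZS β n := IpdsawAux.ZS_pos β hn
    have key : u m + u n ≤ u (m + n) := by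
      rw [hu]
      dsimp only
      rw [← Real.log_mul (ne_of_gt hm') (ne_of_gt hn')]
      exact Real.log_le_log (mul_pos hm' hn') (IpdsawAux.ZS_superadd β hβ)
    dsimp only
    linarith
  have hbdd : BddBelow (Set.range fun n : ℕ => (-u n) / n) := by
    refine ⟨-(β + Real.log 6 + 1), ?_⟩
    rintro x ⟨n, rfl⟩
    have hconst : 0 ≤ β + Real.log 6 + 1 := by
      have := Real.log_nonneg (by norm_num : (1:ℝ) ≤ 6)
      linarith
    rcases Nat.eq_zero_or_pos n with rfl | hn
    · simp [hu0]
      linarith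
    · have hnpos : (0:ℝ) < n := by exact_mod_cast hn
      have hlog := IpdsawAux.ZS_log_le β hβ hn
      dsimp only
      rw [neg_div, neg_le_neg_iff, div_le_iff₀ hnpos]
      exact hlog
  have hlim := hsub.tendsto_lim hbdd
  refine ⟨-(hsub.lim), ?_, ?_⟩
  · have h1 : Tendsto (fun n : ℕ => u n / n) atTop (𝓝 (-(hsub.lim))) := by
      have h2 := hlim.neg
      have h3 : (fun n : ℕ => -((-u n) / n)) = fun n : ℕ => u n / n := by
        funext n
        rw [neg_div, neg_neg]
      rwa [h3] at h2
    have h4 : (fun L : ℕ => Real.log (Z L) / L) = fun n : ℕ => u n / n := by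
      funext L
      rw [hZS L]
    rw [h4]
    exact h1
  · have hle : ∀ k : ℕ, 1 ≤ k → β * (1 - 2/((k:ℝ)+1)) ≤ -(hsub.lim) := by
      intro k hk
      have hkpos : (0:ℝ) < k := by exact_mod_cast hk
      have hLnat : 1 ≤ k * (k + 1) := Nat.one_le_iff_ne_zero.mpr (by positivity)
      have hLpos : (0:ℝ) < ((k * (k+1) : ℕ) : ℝ) := by
        have : (0:ℕ) < k * (k+1) := hLnat
        exact_mod_cast this
      have h1 : β * (((k:ℝ) - 1) * k) ≤ u (k * (k+1)) := by
        calc β * (((k:ℝ) - 1) * k)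
            = Real.log (Real.exp (β * (((k:ℝ) - 1) * k))) := (Real.log_exp _).symm
          _ ≤ u (k * (k+1)) :=
              Real.log_le_log (Real.exp_pos _) (IpdsawAux.ZS_zig β k hk)
      have h2 := hsub.lim_le_div hbdd (n := k * (k+1)) (by omega)
      have h3 : u (k * (k+1)) / ((k * (k+1) : ℕ) : ℝ) ≤ -(hsub.lim) := by
        simp only [neg_div] at h2
        linarith
      have h4 : β * (((k:ℝ) - 1) * k) / ((k * (k+1) : ℕ) : ℝ)
          ≤ u (k * (k+1)) / ((k * (k+1) : ℕ) : ℝ) := by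
        apply div_le_div_of_nonneg_right h1 hLpos.le
      have h5 : β * (1 - 2/((k:ℝ)+1)) = β * (((k:ℝ) - 1) * k) / ((k * (k+1) : ℕ) : ℝ) := by
        have hcast : ((k * (k+1) : ℕ) : ℝ) = (k:ℝ) * ((k:ℝ)+1) := by push_cast; ring
        rw [hcast]
        have hk1 : (k:ℝ) + 1 ≠ 0 := by positivity
        field_simp
        ring
      rw [h5]
      exact le_trans h4 h3
    have htend : Tendsto (fun k : ℕ => β * (1 - 2/((k:ℝ)+1))) atTop (𝓝 β) := by
      have h0 : Tendsto (fun k : ℕ => ((k:ℝ)+1)) atTop atTop :=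
        tendsto_atTop_add_const_right atTop 1 tendsto_natCast_atTop_atTop
      have h1 : Tendsto (fun k : ℕ => 2/((k:ℝ)+1)) atTop (𝓝 0) :=
        tendsto_const_nhds.div_atTop h0
      have h2 : Tendsto (fun k : ℕ => β * (1 - 2/((k:ℝ)+1))) atTop (𝓝 (β * (1 - 0))) :=
        tendsto_const_nhds.mul (tendsto_const_nhds.sub h1)
      simpa using h2
    exact le_of_tendsto htend (eventually_atTop.mpr ⟨1, fun k hk => hle k hk⟩)
end

section
/- Let β > β_c, where β_c is the unique solution of Γ_β = 1 with Γ_β := (1+e^{-β/2})/((1-e^{-β/2})e^β). Then the excess free energy f̃(β) := f(β) - β equals 0, i.e. the free energy satisfies f(β) = β for all β ≥ β_c. -/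
open Filter Topology Real Finset

/-!
For `a * b < 0` one has `2 min |a| |b| = |a| + |b| - |a + b|`, so the number of self-touchings
`H(l)` of a configuration with `N` stretches and total length `L` satisfies
`β H(l) = β (L - N) - (β / 2) ∑ j, |l (j-1) + l j|` (with `l (-1) = l N = 0`). The map
`l ↦ (l (j-1) + l j)_j` is injective, so these configurations contribute at most
`e^{β (L - N)} c_β ^ (N + 1) = c_β e^{β L} Γ_β ^ N` with `c_β = ∑ k : ℤ, e^{-β |k| / 2}`.
Since `Γ_β` decreases in `β`, `Γ_β ≤ 1` for `β ≥ β_c`, whence `Z_L ≤ c_β L e^{β L}` and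
`f(β) ≤ β`. Conversely `n + 1` stretches of length `n` with alternating directions have
`n ^ 2` self-touchings, so `Z_{(n+1)^2} ≥ e^{β n ^ 2}` and `f(β) ≥ β`.
-/

lemma hasSum_pow_natAbs {q : ℝ} (hq0 : 0 ≤ q) (hq1 : q < 1) :
    HasSum (fun x : ℤ => q ^ x.natAbs) ((1 + q) / (1 - q)) := by
  have hgeom := hasSum_geometric_of_lt_one hq0 hq1
  have hneg : HasSum (fun n : ℕ => q ^ (-((n : ℤ) + 1)).natAbs) (q * (1 - q)⁻¹) := by
    simp_rw [show ∀ n : ℕ, (-((n : ℤ) + 1)).natAbs = n + 1 by omega, pow_succ']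
    exact hgeom.mul_left q
  have hsum := HasSum.of_nat_of_neg_add_one (f := fun x : ℤ => q ^ x.natAbs) hgeom hneg
  rwa [← one_add_mul, ← div_eq_mul_inv] at hsum

lemma sum_prod_le_pow_of_hasSum {α ι : Type*} [Fintype ι] {g : α → ℝ} {a : ℝ}
    (hg : ∀ x, 0 ≤ g x) (ha : HasSum g a) (t : Finset (ι → α)) :
    ∑ u ∈ t, ∏ j, g (u j) ≤ a ^ Fintype.card ι := by
  classical
  calc ∑ u ∈ t, ∏ j, g (u j)
      ≤ ∑ u ∈ Fintype.piFinset fun j => t.image (· j), ∏ j, g (u j) :=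
        sum_le_sum_of_subset_of_nonneg
          (fun u hu => Fintype.mem_piFinset.2 fun j => mem_image_of_mem _ hu)
          (fun _ _ _ => prod_nonneg fun _ _ => hg _)
    _ = ∏ j, ∑ x ∈ t.image (· j), g x := (prod_univ_sum _ _).symm
    _ ≤ ∏ _j : ι, a :=
        prod_le_prod (fun _ _ => sum_nonneg fun x _ => hg x)
          fun _ _ => sum_le_hasSum _ (fun x _ => hg x) ha
    _ = a ^ Fintype.card ι := by rw [prod_const, card_univ]

lemma le_of_tendsto_log_div_of_le {Z : ℕ → ℝ} {f β C : ℝ}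
    (hf : Tendsto (fun L : ℕ => log (Z L) / L) atTop (𝓝 f)) (hpos : ∀ L, 1 ≤ L → 0 < Z L)
    (hC : 0 < C) (hle : ∀ L, Z L ≤ C * L * exp (β * L)) : f ≤ β := by
  have hlog : Tendsto (fun L : ℕ => log L / L) atTop (𝓝 0) :=
    isLittleO_log_id_atTop.tendsto_div_nhds_zero.comp tendsto_natCast_atTop_atTop
  have hlim : Tendsto (fun L : ℕ => β + (log C / L + log L / L)) atTop (𝓝 β) := by
    simpa using ((tendsto_const_div_atTop_nhds_zero_nat (log C)).add hlog).const_add β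
  refine le_of_tendsto_of_tendsto hf hlim (eventually_atTop.2 ⟨1, fun L hL1 => ?_⟩)
  have hL : (0 : ℝ) < L := by exact_mod_cast hL1
  calc log (Z L) / L ≤ log (C * L * exp (β * L)) / L :=
        div_le_div_of_nonneg_right (log_le_log (hpos L hL1) (hle L)) hL.le
    _ = β + (log C / L + log L / L) := by
        rw [log_mul (by positivity) (exp_pos _).ne', log_mul hC.ne' hL.ne', log_exp]
        field_simp
        ring

lemma le_of_tendsto_log_div_of_exp_le {Z : ℕ → ℝ} {f β : ℝ}
    (hf : Tendsto (fun L : ℕ => log (Z L) / L) atTop (𝓝 f))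
    (hge : ∀ n : ℕ, exp (β * (n * n)) ≤ Z ((n + 1) * (n + 1))) : β ≤ f := by
  have hsq : Tendsto (fun n : ℕ => (n + 1) * (n + 1)) atTop atTop :=
    tendsto_atTop_mono (fun n => (Nat.le_succ n).trans (Nat.le_mul_self _)) tendsto_id
  have hlim : Tendsto (fun n : ℕ => β * ((n : ℝ) / (n + 1)) ^ 2) atTop (𝓝 β) := by
    simpa using ((tendsto_natCast_div_add_atTop (1 : ℝ)).pow 2).const_mul β
  refine le_of_tendsto_of_tendsto hlim (hf.comp hsq) (Eventually.of_forall fun n => ?_)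
  have hn : (0 : ℝ) < (n + 1) * (n + 1) := by positivity
  simp only [Function.comp_apply, Nat.cast_mul, Nat.cast_add, Nat.cast_one]
  rw [le_div_iff₀ hn]
  calc β * ((n : ℝ) / (n + 1)) ^ 2 * ((n + 1) * (n + 1)) = log (exp (β * (n * n))) := by
        rw [log_exp]; field_simp
    _ ≤ log (Z ((n + 1) * (n + 1))) := log_le_log (exp_pos _) (hge n)

namespace IPDSAW

-- A configuration with `N` stretches is `l : Fin N → ℤ`, `l i` being the signed length of the
-- `i`-th vertical stretch; its total length is `N + ∑ i, |l i|`, and consecutive stretches of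
-- signed lengths `a`, `b` touch each other `contact a b` times.
def contact (a b : ℤ) : ℤ := if a * b < 0 then min |a| |b| else 0

lemma abs_add_eq_sub_two_mul_contact (a b : ℤ) : |a + b| = |a| + |b| - 2 * contact a b := by
  unfold contact
  split_ifs with h
  · rcases mul_neg_iff.mp h with ⟨ha, hb⟩ | ⟨ha, hb⟩ <;>
      simp only [abs_eq_max_neg, min_def, max_def] <;> split_ifs <;> omega
  · rcases mul_nonneg_iff.mp (not_lt.mp h) with ⟨ha, hb⟩ | ⟨ha, hb⟩ <;>
      simp only [abs_eq_max_neg, max_def] <;> split_ifs <;> omega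

@[simp] lemma contact_zero_left (b : ℤ) : contact 0 b = 0 := by simp [contact]

@[simp] lemma contact_zero_right (a : ℤ) : contact a 0 = 0 := by simp [contact]

lemma contact_neg_right (a : ℤ) : contact a (-a) = |a| := by
  rcases eq_or_ne a 0 with rfl | ha
  · simp
  · rw [contact, if_pos (by nlinarith [mul_self_pos.2 ha]), abs_neg, min_self]

lemma sum_abs_add {ι : Type*} (s : Finset ι) (u v : ι → ℤ) :
    ∑ j ∈ s, |u j + v j| = ∑ j ∈ s, |u j| + ∑ j ∈ s, |v j| - 2 * ∑ j ∈ s, contact (u j) (v j) := by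
  simp only [abs_add_eq_sub_two_mul_contact, sum_sub_distrib, sum_add_distrib, mul_sum]

variable {N : ℕ}

def contactNumber (l : Fin N → ℤ) : ℤ :=
  ∑ i : Fin N, if h : (i : ℕ) + 1 < N then contact (l i) (l ⟨i + 1, h⟩) else 0

-- `(l 0, l 0 + l 1, …, l (N-2) + l (N-1), l (N-1))`: up to signs, the increments of the
-- random walk `V` in the paper's representation of the partition function.
def adjacentSums (l : Fin N → ℤ) : Fin (N + 1) → ℤ := Fin.cons 0 l + Fin.snoc l 0

lemma adjacentSums_castSucc (l : Fin N → ℤ) (i : Fin N) :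
    adjacentSums l i.castSucc = (Fin.cons 0 l : Fin (N + 1) → ℤ) i.castSucc + l i := by
  simp [adjacentSums]

lemma adjacentSums_injective : Function.Injective (adjacentSums (N := N)) := by
  intro l l' h
  cases N with
  | zero => exact Subsingleton.elim l l'
  | succ n =>
    funext i
    induction i using Fin.induction with
    | zero =>
      have := congrFun h (Fin.castSucc 0)
      rw [adjacentSums_castSucc, adjacentSums_castSucc] at this
      simpa using this
    | succ i ih =>
      have := congrFun h i.succ.castSucc
      rw [adjacentSums_castSucc, adjacentSums_castSucc, ← Fin.succ_castSucc, Fin.cons_succ,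
        Fin.cons_succ, ih] at this
      exact add_left_cancel this

lemma sum_abs_adjacentSums (l : Fin N → ℤ) :
    ∑ j, |adjacentSums l j| = 2 * ∑ i, |l i| - 2 * contactNumber l := by
  have hcons : ∑ j, |(Fin.cons 0 l : Fin (N + 1) → ℤ) j| = ∑ i, |l i| := by
    simp [Fin.sum_univ_succ]
  have hsnoc : ∑ j, |(Fin.snoc l 0 : Fin (N + 1) → ℤ) j| = ∑ i, |l i| := by
    simp [Fin.sum_univ_castSucc]
  have hcontact : ∑ j : Fin (N + 1),
      contact (Fin.cons (α := fun _ => ℤ) 0 l j) (Fin.snoc (α := fun _ => ℤ) l 0 j) =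
        contactNumber l := by
    rw [Fin.sum_univ_succ, Fin.cons_zero, contact_zero_left, zero_add, contactNumber]
    refine sum_congr rfl fun i _ => ?_
    rw [Fin.cons_succ]
    split_ifs with h
    · rw [show i.succ = Fin.castSucc ⟨i + 1, h⟩ from rfl, Fin.snoc_castSucc]
    · rw [show i.succ = Fin.last N from Fin.ext (by simp; omega), Fin.snoc_last,
        contact_zero_right]
  simp only [adjacentSums, Pi.add_apply]
  rw [sum_abs_add, hcons, hsnoc, hcontact]
  ring

noncomputable def weight (β : ℝ) (L : ℕ) (l : Fin N → ℤ) : ℝ :=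
  if ∑ i, |l i| + (N : ℤ) = L then exp (β * contactNumber l) else 0

noncomputable def partitionFunction (β : ℝ) (L : ℕ) : ℝ :=
  ∑ N ∈ Icc 1 L, ∑' l : Fin N → ℤ, weight β L l

-- `c_β` of the paper, so that `Γ_β = c_β e^{-β}`.
noncomputable def normalizer (β : ℝ) : ℝ := (1 + exp (-β / 2)) / (1 - exp (-β / 2))

lemma exp_neg_half_lt_one {β : ℝ} (hβ : 0 < β) : exp (-β / 2) < 1 :=
  exp_lt_one_iff.2 (by linarith)

lemma normalizer_pos {β : ℝ} (hβ : 0 < β) : 0 < normalizer β :=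
  div_pos (by positivity) (sub_pos.2 (exp_neg_half_lt_one hβ))

lemma antitoneOn_normalizer_mul_exp_neg :
    AntitoneOn (fun b => normalizer b * exp (-b)) (Set.Ioi 0) := by
  intro a ha b _ hab
  have hqa := exp_neg_half_lt_one ha
  have hqb : exp (-b / 2) ≤ exp (-a / 2) := exp_le_exp.2 (by linarith)
  have hnormalizer : normalizer b ≤ normalizer a :=
    div_le_div₀ (by positivity) (by linarith) (by linarith) (by linarith)
  exact mul_le_mul hnormalizer (exp_le_exp.2 (neg_le_neg hab)) (exp_pos _).le
    (normalizer_pos ha).le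

lemma weight_nonneg (β : ℝ) (L : ℕ) (l : Fin N → ℤ) : 0 ≤ weight β L l := by
  unfold weight; positivity

lemma weight_le (β : ℝ) (L : ℕ) (l : Fin N → ℤ) :
    weight β L l ≤ exp (β * (L - N)) * ∏ j, exp (-β / 2) ^ (adjacentSums l j).natAbs := by
  unfold weight
  split_ifs with hL
  · apply le_of_eq
    have hH : (contactNumber l : ℝ) = L - N - (∑ j, |adjacentSums l j| : ℤ) / 2 := by
      rw [sum_abs_adjacentSums, show ∑ i, |l i| = (L : ℤ) - N by omega]
      push_cast; ring
    simp_rw [← exp_nat_mul, ← exp_sum, ← exp_add, hH, Nat.cast_natAbs]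
    push_cast
    rw [← sum_mul]
    congr 1
    ring
  · positivity

lemma sum_weight_le {β : ℝ} (hβ : 0 < β) (L : ℕ) (s : Finset (Fin N → ℤ)) :
    ∑ l ∈ s, weight β L l ≤ exp (β * (L - N)) * normalizer β ^ (N + 1) := by
  have hq0 : 0 ≤ exp (-β / 2) := (exp_pos _).le
  calc ∑ l ∈ s, weight β L l
      ≤ ∑ l ∈ s, exp (β * (L - N)) * ∏ j, exp (-β / 2) ^ (adjacentSums l j).natAbs :=
        sum_le_sum fun l _ => weight_le β L l
    _ = exp (β * (L - N)) * ∑ u ∈ s.image adjacentSums, ∏ j, exp (-β / 2) ^ (u j).natAbs := by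
        rw [← mul_sum, sum_image fun _ _ _ _ h => adjacentSums_injective h]
    _ ≤ exp (β * (L - N)) * normalizer β ^ (N + 1) := by
        gcongr
        simpa [normalizer] using sum_prod_le_pow_of_hasSum (fun x => pow_nonneg hq0 _)
          (hasSum_pow_natAbs hq0 (exp_neg_half_lt_one hβ)) (s.image adjacentSums)

lemma summable_weight {β : ℝ} (hβ : 0 < β) (L : ℕ) : Summable (weight (N := N) β L) :=
  summable_of_sum_le (weight_nonneg β L) (sum_weight_le hβ L)

lemma tsum_weight_le {β : ℝ} (hβ : 0 < β) (L : ℕ) :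
    ∑' l : Fin N → ℤ, weight β L l ≤ exp (β * (L - N)) * normalizer β ^ (N + 1) :=
  tsum_le_of_sum_le' (by have := normalizer_pos hβ; positivity) (sum_weight_le hβ L)

lemma partitionFunction_le {β : ℝ} (hβ : 0 < β) (hΓ : normalizer β * exp (-β) ≤ 1) (L : ℕ) :
    partitionFunction β L ≤ normalizer β * L * exp (β * L) := by
  have hc := normalizer_pos hβ
  have hN : ∀ N, ∑' l : Fin N → ℤ, weight β L l ≤ normalizer β * exp (β * L) := fun N =>
    calc ∑' l : Fin N → ℤ, weight β L l ≤ exp (β * (L - N)) * normalizer β ^ (N + 1) :=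
          tsum_weight_le hβ L
      _ = normalizer β * exp (β * L) * (normalizer β * exp (-β)) ^ N := by
          rw [mul_pow, ← exp_nat_mul, pow_succ, show β * (L - N) = β * L + N * -β by ring,
            exp_add]
          ring
      _ ≤ normalizer β * exp (β * L) :=
          mul_le_of_le_one_right (by positivity) (pow_le_one₀ (by positivity) hΓ)
  calc partitionFunction β L ≤ ∑ N ∈ Icc 1 L, normalizer β * exp (β * L) :=
        sum_le_sum fun N _ => hN N
    _ = normalizer β * L * exp (β * L) := by simp; ring

def zigzag (m : ℕ) : Fin N → ℤ := fun i => (-1) ^ (i : ℕ) * m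

lemma contactNumber_zigzag (n m : ℕ) : contactNumber (zigzag (N := n + 1) m) = n * m := by
  rw [contactNumber, Fin.sum_univ_castSucc]
  simp [zigzag, pow_succ, neg_mul, contact_neg_right, abs_mul]

lemma weight_zigzag (β : ℝ) (n m : ℕ) :
    weight β ((n + 1) * (m + 1)) (zigzag (N := n + 1) m) = exp (β * (n * m)) := by
  rw [weight, if_pos, contactNumber_zigzag]
  · norm_cast
  · simp [zigzag, abs_mul]; ring

lemma exp_le_partitionFunction {β : ℝ} (hβ : 0 < β) (n m : ℕ) :
    exp (β * (n * m)) ≤ partitionFunction β ((n + 1) * (m + 1)) :=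
  calc exp (β * (n * m)) = weight β _ (zigzag (N := n + 1) m) := (weight_zigzag β n m).symm
    _ ≤ ∑' l : Fin (n + 1) → ℤ, weight β ((n + 1) * (m + 1)) l :=
        (summable_weight hβ _).le_tsum _ fun l _ => weight_nonneg β _ l
    _ ≤ partitionFunction β ((n + 1) * (m + 1)) :=
        single_le_sum (f := fun N => ∑' l : Fin N → ℤ, weight β ((n + 1) * (m + 1)) l)
          (fun _ _ => tsum_nonneg fun _ => weight_nonneg β _ _)
          (mem_Icc.2 ⟨by omega, Nat.le_mul_of_pos_right _ (by omega)⟩)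

lemma partitionFunction_pos {β : ℝ} (hβ : 0 < β) {L : ℕ} (hL : 1 ≤ L) :
    0 < partitionFunction β L := by
  obtain ⟨n, rfl⟩ := Nat.exists_eq_add_of_le' hL
  simpa using (exp_pos _).trans_le (exp_le_partitionFunction hβ n 0)

end IPDSAW

open IPDSAW

/-- For `β ≥ β_c`, where `β_c` is the unique solution of `Γ_β = 1` with
`Γ_β = (1+e^{-β/2})/((1-e^{-β/2}) e^β)`, the free energy of IPDSAW satisfies
`f(β) = β`, i.e. the excess free energy `f(β) - β` vanishes. -/
theorem excess_free_energy_zero_in_collapsed_phase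
    (Γ : ℝ → ℝ)
    (hΓ : ∀ b : ℝ, Γ b = (1 + Real.exp (-b / 2)) / ((1 - Real.exp (-b / 2))
      * Real.exp b))
    (βc : ℝ) (hβc : 0 < βc) (hβc1 : Γ βc = 1)
    (β : ℝ) (hβ : βc ≤ β)
    (Z : ℕ → ℝ)
    (hZ : ∀ L : ℕ, Z L = ∑ N ∈ Finset.Icc 1 L, ∑' l : Fin N → ℤ,
      if (∑ i, |l i|) + (N : ℤ) = (L : ℤ) then
        Real.exp (β * ((∑ i : Fin N, if h : (i : ℕ) + 1 < N then
          (if l i * l ⟨(i : ℕ) + 1, h⟩ < 0 then min |l i| |l ⟨(i : ℕ) + 1, h⟩| else 0)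
          else 0 : ℤ) : ℝ))
      else 0)
    (f : ℝ) (hf : Tendsto (fun L : ℕ => Real.log (Z L) / L) atTop (𝓝 f)) :
    f = β := by
  have hβ0 : 0 < β := hβc.trans_le hβ
  have hΓ_eq : ∀ b, Γ b = normalizer b * exp (-b) := fun b => by
    rw [hΓ, normalizer, exp_neg, div_mul_eq_div_div, div_eq_mul_inv]
  have hΓβ : normalizer β * exp (-β) ≤ 1 :=
    (antitoneOn_normalizer_mul_exp_neg hβc hβ0 hβ).trans_eq (by rw [← hβc1, hΓ_eq])
  obtain rfl : Z = partitionFunction β := funext hZ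
  exact le_antisymm
    (le_of_tendsto_log_div_of_le hf (fun _ => partitionFunction_pos hβ0) (normalizer_pos hβ0)
      (partitionFunction_le hβ0 hΓβ))
    (le_of_tendsto_log_div_of_exp_le hf fun n => exp_le_partitionFunction hβ0 n n)
end

section
/- Let X_1, X_2, … be i.i.d. ℕ-valued random variables with P(X_1 = n) ~ c₁ n^{-4/3} as n → ∞ for some c₁ > 0 (heavy-tailed with index 1/3). Then E[X_1] = +∞, and for every ε > 0, lim_{k→∞} limsup_{n→∞} P( Σ_{r ≤ ν_n} X_r 1_{X_r < n/k} ≥ ε n ) can be made arbitrarily small, where ν_n := inf{m : X_1 + ⋯ + X_m ≥ n}; equivalently, the sum up to first passage of level n is asymptotically dominated by finitely many of the largest terms. -/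
open Filter Topology MeasureTheory ProbabilityTheory

/-!
If `P(X = j) ≍ j^{-(1+α)}` (here `α = 1/3`), then `P(X ≥ n) ≳ n^{-α}`, so
`E X ≥ n P(X ≥ n) → ∞`, and `E[X; X < t] ≲ t^{1-α}`. Before the first passage `ν_n` above `n`,
either one of the first `m` summands already reaches `n`, in which case `ν_n ≤ m` and Markov's
inequality bounds the sum of the first `m` summands truncated at `t = n/k` by
`m t^{1-α} / (ε n)`, or none does, which has probability `(1 - P(X ≥ n))^m ≤ exp(-m P(X ≥ n))`.
Taking `m ≈ n^α k^{(1-α)/2}` makes both bounds uniform in `n` and of order `k^{-(1-α)/2}` up to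
an exponentially small term, so they vanish as `k → ∞`.
-/

lemma Real.sub_one_rpow_le {p y : ℝ} (hp0 : 0 ≤ p) (hp1 : p ≤ 1) (hy : 1 ≤ y) :
    (y - 1) ^ p ≤ y ^ p - p * y ^ (p - 1) := by
  have hy0 : 0 < y := by linarith
  have hs : -1 ≤ -y⁻¹ := neg_le_neg (inv_le_one_of_one_le₀ hy)
  have hsplit : y - 1 = y * (1 + -y⁻¹) := by field_simp; ring
  calc (y - 1) ^ p = y ^ p * (1 + -y⁻¹) ^ p := by
        rw [hsplit, Real.mul_rpow hy0.le (by linarith)]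
    _ ≤ y ^ p * (1 + p * -y⁻¹) :=
        mul_le_mul_of_nonneg_left (rpow_one_add_le_one_add_mul_self hs hp0 hp1) (by positivity)
    _ = y ^ p - p * y ^ (p - 1) := by rw [Real.rpow_sub_one hy0.ne']; field_simp; ring

lemma sum_range_succ_rpow_neg_le {α : ℝ} (hα0 : 0 < α) (hα1 : α < 1) (T : ℕ) :
    ∑ j ∈ Finset.range (T + 1), (j : ℝ) ^ (-α) ≤ (T : ℝ) ^ (1 - α) / (1 - α) := by
  induction T with
  | zero => simp [Real.zero_rpow (neg_ne_zero.2 hα0.ne'), Real.zero_rpow (sub_ne_zero.2 hα1.ne')]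
  | succ T ih =>
    have hstep := Real.sub_one_rpow_le (sub_nonneg.2 hα1.le) (sub_le_self 1 hα0.le)
      (le_add_of_nonneg_left (Nat.cast_nonneg T) : (1 : ℝ) ≤ T + 1)
    rw [add_sub_cancel_right, sub_sub_cancel_left] at hstep
    rw [Finset.sum_range_succ, Nat.cast_add_one, le_div_iff₀ (sub_pos.2 hα1)]
    rw [le_div_iff₀ (sub_pos.2 hα1)] at ih
    nlinarith

lemma sum_range_ceil_rpow_neg_le {α : ℝ} (hα0 : 0 < α) (hα1 : α < 1) {t : ℝ} (ht : 0 ≤ t) :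
    ∑ j ∈ Finset.range ⌈t⌉₊, (j : ℝ) ^ (-α) ≤ t ^ (1 - α) / (1 - α) := by
  cases hT : ⌈t⌉₊ with
  | zero =>
    rw [Finset.sum_range_zero]
    exact div_nonneg (Real.rpow_nonneg ht _) (sub_pos.2 hα1).le
  | succ T =>
    have hTt : (T : ℝ) ≤ t := by
      have := Nat.ceil_lt_add_one ht
      rw [hT, Nat.cast_succ] at this
      linarith
    exact (sum_range_succ_rpow_neg_le hα0 hα1 T).trans (by gcongr)

lemma sum_range_ceil_mul_le_of_rpow_mul_le {p : ℕ → ℝ} {α C : ℝ} (hα0 : 0 < α) (hα1 : α < 1)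
    (hC : ∀ j : ℕ, (j : ℝ) ^ (1 + α) * p j ≤ C) {t : ℝ} (ht : 0 ≤ t) :
    ∑ j ∈ Finset.range ⌈t⌉₊, (j : ℝ) * p j ≤ C * (t ^ (1 - α) / (1 - α)) := by
  have hC0 : 0 ≤ C := by simpa [Real.zero_rpow (by linarith : 1 + α ≠ 0)] using hC 0
  have hj (j : ℕ) : (j : ℝ) * p j ≤ C * (j : ℝ) ^ (-α) := by
    have hsplit : (j : ℝ) ^ (-α) * (j : ℝ) ^ (1 + α) = j := by
      have hexp : -α + (1 + α) = 1 := by ring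
      rw [← Real.rpow_add' (Nat.cast_nonneg j) (by rw [hexp]; exact one_ne_zero), hexp,
        Real.rpow_one]
    calc (j : ℝ) * p j = (j : ℝ) ^ (-α) * ((j : ℝ) ^ (1 + α) * p j) := by
          rw [← mul_assoc, hsplit]
      _ ≤ (j : ℝ) ^ (-α) * C := mul_le_mul_of_nonneg_left (hC j) (by positivity)
      _ = C * (j : ℝ) ^ (-α) := mul_comm _ _
  calc ∑ j ∈ Finset.range ⌈t⌉₊, (j : ℝ) * p j
      ≤ ∑ j ∈ Finset.range ⌈t⌉₊, C * (j : ℝ) ^ (-α) := Finset.sum_le_sum fun j _ => hj j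
    _ = C * ∑ j ∈ Finset.range ⌈t⌉₊, (j : ℝ) ^ (-α) := (Finset.mul_sum _ _ _).symm
    _ ≤ C * (t ^ (1 - α) / (1 - α)) :=
        mul_le_mul_of_nonneg_left (sum_range_ceil_rpow_neg_le hα0 hα1 ht) hC0

noncomputable def truncLT (t : ℝ) (x : ℕ) : ℝ := if (x : ℝ) < t then x else 0

lemma truncLT_nonneg (t : ℝ) (x : ℕ) : 0 ≤ truncLT t x := by
  unfold truncLT; split_ifs <;> positivity

lemma truncLT_of_lt_ceil {t : ℝ} {j : ℕ} (h : j < ⌈t⌉₊) : truncLT t j = j :=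
  if_pos (Nat.lt_ceil.mp h)

lemma truncLT_of_ceil_le {t : ℝ} {j : ℕ} (h : ⌈t⌉₊ ≤ j) : truncLT t j = 0 :=
  if_neg (not_lt.mpr (Nat.ceil_le.mp h))

lemma sInf_le_succ_of_le_apply {x : ℕ → ℕ} {n r : ℕ} (h : n ≤ x r) :
    sInf {m : ℕ | n ≤ ∑ i ∈ Finset.range m, x i} ≤ r + 1 :=
  Nat.sInf_le (h.trans (Finset.single_le_sum (fun i _ => Nat.zero_le (x i))
    (Finset.self_mem_range_succ r)))

namespace ProbabilityTheory

variable {Ω β : Type*} [MeasurableSpace Ω] [MeasurableSpace β] {μ : Measure Ω}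
  {X : ℕ → Ω → β}

lemma iIndepFun.measure_biInter_range_preimage_eq_pow (hindep : iIndepFun X μ)
    (hident : ∀ r, IdentDistrib (X r) (X 0) μ μ) {s : Set β} (hs : MeasurableSet s) (m : ℕ) :
    μ (⋂ r ∈ Finset.range m, X r ⁻¹' s) = μ (X 0 ⁻¹' s) ^ m := by
  rw [hindep.meas_biInter fun r _ => ⟨s, hs, rfl⟩,
    Finset.prod_congr rfl fun r _ => (hident r).measure_mem_eq hs, Finset.prod_const,
    Finset.card_range]

lemma IdentDistrib.meas_sum_ge_le_mul_lintegral_div {g : β → ℝ} (hg : Measurable g)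
    (hg0 : ∀ x, 0 ≤ g x)
    (hident : ∀ r, IdentDistrib (X r) (X 0) μ μ) (m : ℕ) {a : ℝ} (ha : 0 < a) :
    μ {ω | a ≤ ∑ r ∈ Finset.range m, g (X r ω)} ≤
      m * (∫⁻ ω, ENNReal.ofReal (g (X 0 ω)) ∂μ) / ENNReal.ofReal a := by
  have hG (r : ℕ) : AEMeasurable (fun ω => ENNReal.ofReal (g (X r ω))) μ :=
    (ENNReal.measurable_ofReal.comp hg).comp_aemeasurable (hident r).aemeasurable_fst
  calc μ {ω | a ≤ ∑ r ∈ Finset.range m, g (X r ω)}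
      ≤ μ {ω | ENNReal.ofReal a ≤ ∑ r ∈ Finset.range m, ENNReal.ofReal (g (X r ω))} := by
        refine measure_mono fun ω (hω : a ≤ _) => show ENNReal.ofReal a ≤ _ from ?_
        rw [← ENNReal.ofReal_sum_of_nonneg fun r _ => hg0 _]
        exact ENNReal.ofReal_le_ofReal hω
    _ ≤ (∫⁻ ω, ∑ r ∈ Finset.range m, ENNReal.ofReal (g (X r ω)) ∂μ) / ENNReal.ofReal a :=
        meas_ge_le_lintegral_div (Finset.aemeasurable_fun_sum _ fun r _ => hG r)
          (ENNReal.ofReal_pos.2 ha).ne' ENNReal.ofReal_ne_top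
    _ = m * (∫⁻ ω, ENNReal.ofReal (g (X 0 ω)) ∂μ) / ENNReal.ofReal a := by
        have hsame (r : ℕ) : ∫⁻ ω, ENNReal.ofReal (g (X r ω)) ∂μ =
            ∫⁻ ω, ENNReal.ofReal (g (X 0 ω)) ∂μ :=
          ((hident r).comp (ENNReal.measurable_ofReal.comp hg)).lintegral_eq
        rw [lintegral_finsetSum' _ fun r _ => hG r, Finset.sum_congr rfl fun r _ => hsame r,
          Finset.sum_const, Finset.card_range, nsmul_eq_mul]

end ProbabilityTheory

section NatValued

variable {Ω : Type*} [MeasurableSpace Ω] {μ : Measure Ω} {Y : Ω → ℕ}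

lemma lintegral_truncLT_eq [IsFiniteMeasure μ] (hY : Measurable Y) (t : ℝ) :
    ∫⁻ ω, ENNReal.ofReal (truncLT t (Y ω)) ∂μ =
      ENNReal.ofReal (∑ j ∈ Finset.range ⌈t⌉₊, (j : ℝ) * μ.real {ω | Y ω = j}) := by
  rw [← lintegral_map (f := fun j => ENNReal.ofReal (truncLT t j)) measurable_from_nat hY,
    lintegral_countable', tsum_eq_sum (s := Finset.range ⌈t⌉₊) fun j hj => ?_,
    ENNReal.ofReal_sum_of_nonneg fun j _ => by positivity]
  · refine Finset.sum_congr rfl fun j hj => ?_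
    rw [truncLT_of_lt_ceil (Finset.mem_range.mp hj),
      Measure.map_apply hY (measurableSet_singleton j), ENNReal.ofReal_mul (Nat.cast_nonneg j),
      ENNReal.ofReal_natCast, measureReal_def, ENNReal.ofReal_toReal (measure_ne_top _ _)]
    rfl
  · rw [truncLT_of_ceil_le (not_lt.mp (Finset.mem_range.not.mp hj)), ENNReal.ofReal_zero,
      zero_mul]

lemma le_measureReal_ge_of_le_rpow_mul [IsFiniteMeasure μ] (hY : Measurable Y) {α c : ℝ}
    (hα : -1 ≤ α) (hc : 0 ≤ c)
    {N n : ℕ} (hlow : ∀ j, N ≤ j → c ≤ (j : ℝ) ^ (1 + α) * μ.real {ω | Y ω = j})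
    (hN : N ≤ n) (hn : 0 < n) :
    c / 2 ^ (1 + α) * (n : ℝ) ^ (-α) ≤ μ.real {ω | n ≤ Y ω} := by
  have hn0 : (0 : ℝ) < n := by exact_mod_cast hn
  have hpoint : ∀ j ∈ Finset.Ico n (2 * n),
      c * (2 * n : ℝ) ^ (-(1 + α)) ≤ μ.real {ω | Y ω = j} := by
    intro j hj
    obtain ⟨hnj, hj2⟩ := Finset.mem_Ico.mp hj
    have hj0 : (0 : ℝ) < j := hn0.trans_le (by exact_mod_cast hnj)
    calc c * (2 * n : ℝ) ^ (-(1 + α)) ≤ c * (j : ℝ) ^ (-(1 + α)) := by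
          have hj2' : (j : ℝ) ≤ 2 * n := by exact_mod_cast hj2.le
          exact mul_le_mul_of_nonneg_left (Real.rpow_le_rpow_of_nonpos hj0 hj2' (by linarith)) hc
      _ ≤ ((j : ℝ) ^ (1 + α) * μ.real {ω | Y ω = j}) * (j : ℝ) ^ (-(1 + α)) := by
          gcongr
          exact hlow j (hN.trans hnj)
      _ = μ.real {ω | Y ω = j} := by
          rw [Real.rpow_neg hj0.le, mul_comm, ← mul_assoc, inv_mul_cancel₀ (by positivity),
            one_mul]
  have hdisj : (Finset.Ico n (2 * n) : Set ℕ).PairwiseDisjoint fun j => {ω | Y ω = j} :=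
    fun i _ j _ hij => Set.disjoint_left.mpr fun ω hi hj => hij (hi.symm.trans hj)
  calc c / 2 ^ (1 + α) * (n : ℝ) ^ (-α)
      = ∑ j ∈ Finset.Ico n (2 * n), c * (2 * n : ℝ) ^ (-(1 + α)) := by
        have h2n : (2 * n : ℝ) ^ (-(1 + α)) = ((2 : ℝ) ^ (1 + α) * (n * (n : ℝ) ^ α))⁻¹ := by
          rw [Real.rpow_neg (by positivity), Real.mul_rpow zero_le_two hn0.le, Real.rpow_add hn0,
            Real.rpow_one]
        rw [Finset.sum_const, Nat.card_Ico, show 2 * n - n = n by omega, nsmul_eq_mul, h2n,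
          Real.rpow_neg hn0.le]
        field_simp
    _ ≤ ∑ j ∈ Finset.Ico n (2 * n), μ.real {ω | Y ω = j} := Finset.sum_le_sum hpoint
    _ = μ.real (⋃ j ∈ Finset.Ico n (2 * n), {ω | Y ω = j}) :=
        (measureReal_biUnion_finset hdisj fun j _ => hY (measurableSet_singleton j)).symm
    _ ≤ μ.real {ω | n ≤ Y ω} := by
        refine measureReal_mono (fun ω hω => ?_)
        obtain ⟨j, hj, hωj⟩ := Set.mem_iUnion₂.mp hω
        exact (Finset.mem_Ico.mp hj).1.trans_eq hωj.symm

lemma measureReal_lt_pow_le_exp [IsProbabilityMeasure μ] (hY : Measurable Y) (n m : ℕ) :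
    μ.real {ω | Y ω < n} ^ m ≤ Real.exp (-(m * μ.real {ω | n ≤ Y ω})) := by
  set q := μ.real {ω | n ≤ Y ω}
  have hcompl : μ.real {ω | Y ω < n} = 1 - q := by
    have hset : {ω | Y ω < n} = {ω | n ≤ Y ω}ᶜ := by
      ext ω
      simp
    rw [hset, probReal_compl_eq_one_sub (measurableSet_le measurable_const hY)]
  calc μ.real {ω | Y ω < n} ^ m = (1 - q) ^ m := by rw [hcompl]
    _ ≤ Real.exp (-q) ^ m :=
        pow_le_pow_left₀ (hcompl ▸ measureReal_nonneg) (Real.one_sub_le_exp_neg q) m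
    _ = Real.exp (-(m * q)) := by rw [← Real.exp_nat_mul]; ring_nf

lemma lintegral_eq_top_of_le_measureReal_ge [IsFiniteMeasure μ] (hY : Measurable Y)
    {α c : ℝ} (hα : α < 1) (hc : 0 < c)
    (h : ∀ᶠ n : ℕ in atTop, c * (n : ℝ) ^ (-α) ≤ μ.real {ω | n ≤ Y ω}) :
    ∫⁻ ω, (Y ω : ENNReal) ∂μ = ⊤ := by
  have hlow : ∀ᶠ n : ℕ in atTop,
      ENNReal.ofReal (c * (n : ℝ) ^ (1 - α)) ≤ ∫⁻ ω, (Y ω : ENNReal) ∂μ := by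
    filter_upwards [h, eventually_gt_atTop 0] with n hn hn0
    have hn0' : (0 : ℝ) < n := by exact_mod_cast hn0
    calc ENNReal.ofReal (c * (n : ℝ) ^ (1 - α)) = ENNReal.ofReal (n * (c * (n : ℝ) ^ (-α))) := by
          rw [sub_eq_add_neg, Real.rpow_add hn0', Real.rpow_one]; ring_nf
      _ ≤ ENNReal.ofReal (n * μ.real {ω | n ≤ Y ω}) := by gcongr
      _ = n * μ {ω | (n : ENNReal) ≤ Y ω} := by
          simp only [Nat.cast_le]
          rw [ENNReal.ofReal_mul (Nat.cast_nonneg n), ENNReal.ofReal_natCast, measureReal_def,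
            ENNReal.ofReal_toReal (measure_ne_top _ _)]
      _ ≤ ∫⁻ ω, (Y ω : ENNReal) ∂μ :=
          mul_meas_ge_le_lintegral₀ (measurable_from_nat.comp hY).aemeasurable _
  have hgrow : Tendsto (fun n : ℕ => ENNReal.ofReal (c * (n : ℝ) ^ (1 - α))) atTop (𝓝 ⊤) :=
    ENNReal.tendsto_ofReal_atTop.comp (((tendsto_rpow_atTop (sub_pos.2 hα)).comp
      tendsto_natCast_atTop_atTop).const_mul_atTop hc)
  exact top_le_iff.mp (le_of_tendsto hgrow hlow)

end NatValued

lemma tendsto_limsup_atTop_zero_of_le {u : ℕ → ℕ → ℝ} {B : ℕ → ℝ} (h0 : ∀ k n, 0 ≤ u k n)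
    (h1 : ∀ k n, u k n ≤ 1) (hle : ∀ᶠ k in atTop, ∀ᶠ n in atTop, u k n ≤ B k)
    (hB : Tendsto B atTop (𝓝 0)) :
    Tendsto (fun k => limsup (u k) atTop) atTop (𝓝 0) := by
  refine tendsto_of_tendsto_of_tendsto_of_le_of_le' tendsto_const_nhds hB
    (Eventually.of_forall fun k => ?_) (hle.mono fun k hk => ?_)
  · exact le_limsup_of_frequently_le (Frequently.of_forall fun n => h0 k n)
      (isBoundedUnder_of ⟨1, fun n => h1 k n⟩)
  · exact limsup_le_of_le (isCoboundedUnder_le_of_le atTop fun n => h0 k n) hk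

lemma tendsto_exp_neg_mul_add_mul_inv {ι : Type*} {l : Filter ι} {g : ι → ℝ}
    (hg : Tendsto g l atTop) {c : ℝ} (hc : 0 < c) (D : ℝ) :
    Tendsto (fun k => Real.exp (-(c * g k)) + D * (g k)⁻¹) l (𝓝 0) := by
  have hexp := Real.tendsto_exp_atBot.comp (tendsto_neg_atTop_atBot.comp (hg.const_mul_atTop hc))
  have hinv := (tendsto_inv_atTop_zero.comp hg).const_mul D
  simpa using hexp.add hinv

section FirstPassage

variable {Ω : Type*} [MeasurableSpace Ω] {μ : Measure Ω} {X : ℕ → Ω → ℕ} {ν : ℕ → Ω → ℕ}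

lemma measureReal_truncLT_sum_firstPassage_le [IsFiniteMeasure μ] (hindep : iIndepFun X μ)
    (hident : ∀ r, IdentDistrib (X r) (X 0) μ μ)
    (hν : ∀ n ω, ν n ω = sInf {m : ℕ | n ≤ ∑ r ∈ Finset.range m, X r ω})
    (m n : ℕ) {t a E : ℝ} (ha : 0 < a) (hE0 : 0 ≤ E)
    (hE : ∫⁻ ω, ENNReal.ofReal (truncLT t (X 0 ω)) ∂μ ≤ ENNReal.ofReal E) :
    μ.real {ω | a ≤ ∑ r ∈ Finset.range (ν n ω), truncLT t (X r ω)} ≤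
      μ.real {ω | X 0 ω < n} ^ m + m * E / a := by
  have hincl : {ω | a ≤ ∑ r ∈ Finset.range (ν n ω), truncLT t (X r ω)} ⊆
      (⋂ r ∈ Finset.range m, X r ⁻¹' Set.Iio n) ∪
        {ω | a ≤ ∑ r ∈ Finset.range m, truncLT t (X r ω)} := by
    intro ω (hω : a ≤ _)
    by_cases hbig : ∃ r < m, n ≤ X r ω
    · obtain ⟨r, hrm, hnr⟩ := hbig
      have hνm : ν n ω ≤ m := (hν n ω).trans_le ((sInf_le_succ_of_le_apply hnr).trans hrm)
      exact Or.inr (hω.trans (Finset.sum_le_sum_of_subset_of_nonneg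
        (Finset.range_subset_range.mpr hνm) fun r _ _ => truncLT_nonneg t _))
    · simp only [not_exists, not_and, not_le] at hbig
      exact Or.inl (Set.mem_iInter₂.mpr fun r hr => hbig r (Finset.mem_range.mp hr))
  have hmarkov := IdentDistrib.meas_sum_ge_le_mul_lintegral_div measurable_from_nat
    (truncLT_nonneg t) hident m ha
  calc μ.real {ω | a ≤ ∑ r ∈ Finset.range (ν n ω), truncLT t (X r ω)}
      ≤ μ.real (⋂ r ∈ Finset.range m, X r ⁻¹' Set.Iio n) +
          μ.real {ω | a ≤ ∑ r ∈ Finset.range m, truncLT t (X r ω)} :=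
        (measureReal_mono hincl).trans (measureReal_union_le _ _)
    _ ≤ μ.real {ω | X 0 ω < n} ^ m + m * E / a := by
        gcongr
        · rw [measureReal_def,
            hindep.measure_biInter_range_preimage_eq_pow hident measurableSet_Iio,
            ENNReal.toReal_pow]
          rfl
        · calc μ.real {ω | a ≤ ∑ r ∈ Finset.range m, truncLT t (X r ω)}
              ≤ (m * ENNReal.ofReal E / ENNReal.ofReal a).toReal :=
                ENNReal.toReal_mono (ENNReal.div_ne_top (by finiteness)
                  (ENNReal.ofReal_pos.2 ha).ne') (hmarkov.trans (by gcongr))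
            _ = m * E / a := by
                rw [ENNReal.toReal_div, ENNReal.toReal_mul, ENNReal.toReal_ofReal hE0,
                  ENNReal.toReal_ofReal ha.le, ENNReal.toReal_natCast]

lemma measureReal_truncLT_sum_firstPassage_le_exp_add [IsProbabilityMeasure μ]
    (hX0 : Measurable (X 0)) (hindep : iIndepFun X μ) (hident : ∀ r, IdentDistrib (X r) (X 0) μ μ)
    (hν : ∀ n ω, ν n ω = sInf {m : ℕ | n ≤ ∑ r ∈ Finset.range m, X r ω})
    {α C c ε : ℝ} (hα0 : 0 < α) (hα1 : α < 1) (hc : 0 ≤ c) (hε : 0 < ε)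
    (hC : ∀ j : ℕ, (j : ℝ) ^ (1 + α) * μ.real {ω | X 0 ω = j} ≤ C)
    {k n : ℕ} (hk : 1 ≤ k) (hn : 0 < n) (hq : c * (n : ℝ) ^ (-α) ≤ μ.real {ω | n ≤ X 0 ω}) :
    μ.real {ω | ε * n ≤ ∑ r ∈ Finset.range (ν n ω), truncLT ((n : ℝ) / k) (X r ω)} ≤
      Real.exp (-(c * (k : ℝ) ^ ((1 - α) / 2))) +
        2 * C / ((1 - α) * ε) * ((k : ℝ) ^ ((1 - α) / 2))⁻¹ := by
  have hn0 : (0 : ℝ) < n := by exact_mod_cast hn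
  have hk1 : (1 : ℝ) ≤ k := by exact_mod_cast hk
  have hC0 : 0 ≤ C := by simpa [Real.zero_rpow (by linarith : 1 + α ≠ 0)] using hC 0
  have h1α : 0 < 1 - α := by linarith
  set u := (n : ℝ) ^ α with hu
  set b := (k : ℝ) ^ ((1 - α) / 2) with hb
  have hu1 : 1 ≤ u := Real.one_le_rpow (by exact_mod_cast hn) hα0.le
  have hb1 : 1 ≤ b := Real.one_le_rpow hk1 (by linarith)
  -- `m P(X ≥ n) ≥ c b` and `m E[X; X < n/k] / n ≲ b⁻¹`, with `b = k^((1-α)/2)`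
  set m := ⌈u * b⌉₊
  have hm_ge : u * b ≤ m := Nat.le_ceil _
  have hm_le : (m : ℝ) ≤ 2 * (u * b) := by
    have := Nat.ceil_lt_add_one (by positivity : 0 ≤ u * b)
    nlinarith
  set t := (n : ℝ) / k with ht
  set E := C * (t ^ (1 - α) / (1 - α)) with hE
  have hE0 : 0 ≤ E := by positivity
  have hmean : ∫⁻ ω, ENNReal.ofReal (truncLT t (X 0 ω)) ∂μ ≤ ENNReal.ofReal E := by
    rw [lintegral_truncLT_eq hX0]
    exact ENNReal.ofReal_le_ofReal (sum_range_ceil_mul_le_of_rpow_mul_le hα0 hα1 hC (by positivity))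
  refine (measureReal_truncLT_sum_firstPassage_le hindep hident hν m n (by positivity) hE0
    hmean).trans (add_le_add ?_ ?_)
  · have hmq : c * b ≤ m * μ.real {ω | n ≤ X 0 ω} :=
      calc c * b = (u * b) * (c * u⁻¹) := by field_simp
        _ ≤ m * μ.real {ω | n ≤ X 0 ω} :=
            mul_le_mul hm_ge (by rwa [Real.rpow_neg hn0.le] at hq) (by positivity) (by positivity)
    exact (measureReal_lt_pow_le_exp hX0 n m).trans (Real.exp_le_exp.mpr (by linarith))
  · set v := (n : ℝ) ^ (1 - α) with hv
    have hb2 : (k : ℝ) ^ (1 - α) = b ^ 2 := by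
      rw [hb, ← Real.rpow_natCast, ← Real.rpow_mul (by positivity)]
      norm_num
    have huv : u * v = n := by
      rw [hu, hv, ← Real.rpow_add hn0]
      norm_num
    have htα : t ^ (1 - α) = v / b ^ 2 := by
      rw [ht, Real.div_rpow hn0.le (by positivity), hb2]
    have hv0 : 0 < v := by positivity
    calc m * E / (ε * n) ≤ 2 * (u * b) * E / (ε * n) := by gcongr
      _ = 2 * C / ((1 - α) * ε) * b⁻¹ := by
        rw [hE, htα, ← huv]
        field_simp

end FirstPassage

/-- Let `X_1, X_2, …` be i.i.d. `ℕ`-valued random variables with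
`P(X_1 = n) ~ c₁ n^{-4/3}` as `n → ∞` for some `c₁ > 0`. Then `E[X_1] = +∞`, and
with `ν_n` the first passage index of the partial sums above level `n`,
`lim_{k→∞} limsup_{n→∞} P(Σ_{r ≤ ν_n} X_r 1_{X_r < n/k} ≥ ε n) = 0` for every
`ε > 0`: the sum up to first passage of level `n` is asymptotically dominated by
finitely many of the largest terms. -/
theorem heavy_tail_truncation
    {Ω : Type*} [MeasurableSpace Ω] (μ : Measure Ω) [IsProbabilityMeasure μ]
    (X : ℕ → Ω → ℕ)
    (hmeas : ∀ r, Measurable (X r))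
    (hindep : iIndepFun X μ)
    (hident : ∀ r, Measure.map (X r) μ = Measure.map (X 0) μ)
    (c₁ : ℝ) (hc₁ : 0 < c₁)
    (htail : Tendsto (fun n : ℕ => (n : ℝ) ^ ((4 : ℝ) / 3)
      * (μ {ω | X 0 ω = n}).toReal) atTop (𝓝 c₁))
    (ν : ℕ → Ω → ℕ)
    (hν : ∀ n ω, ν n ω = sInf {m : ℕ | n ≤ ∑ r ∈ Finset.range m, X r ω}) :
    (∫⁻ ω, (X 0 ω : ENNReal) ∂μ = ⊤) ∧
    ∀ ε : ℝ, 0 < ε →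
      Tendsto (fun k : ℕ =>
        Filter.limsup (fun n : ℕ =>
          (μ {ω | ε * n ≤ ∑ r ∈ Finset.range (ν n ω),
            if (X r ω : ℝ) < (n : ℝ) / k then (X r ω : ℝ) else 0}).toReal)
          atTop)
        atTop (𝓝 0) := by
  have hid (r : ℕ) : IdentDistrib (X r) (X 0) μ μ :=
    ⟨(hmeas r).aemeasurable, (hmeas 0).aemeasurable, hident r⟩
  have htail' : Tendsto (fun n : ℕ => (n : ℝ) ^ (1 + 1 / 3 : ℝ) * μ.real {ω | X 0 ω = n})
      atTop (𝓝 c₁) := by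
    rw [show (4 : ℝ) / 3 = 1 + 1 / 3 by norm_num] at htail
    exact htail
  obtain ⟨C, hC⟩ := htail'.bddAbove_range
  obtain ⟨N, hN⟩ := eventually_atTop.mp (htail'.eventually (eventually_ge_nhds (half_lt_self hc₁)))
  have hq (n : ℕ) (hn : max N 1 ≤ n) :
      c₁ / 2 / 2 ^ (1 + 1 / 3 : ℝ) * (n : ℝ) ^ (-(1 / 3 : ℝ)) ≤ μ.real {ω | n ≤ X 0 ω} :=
    le_measureReal_ge_of_le_rpow_mul (hmeas 0) (by norm_num) (by positivity) hN
      (le_of_max_le_left hn) (le_of_max_le_right hn)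
  refine ⟨lintegral_eq_top_of_le_measureReal_ge (hmeas 0) (by norm_num) (by positivity)
    (eventually_atTop.mpr ⟨_, hq⟩), fun ε hε => ?_⟩
  refine tendsto_limsup_atTop_zero_of_le (fun _ _ => measureReal_nonneg)
    (fun _ _ => measureReal_le_one) ?_ (tendsto_exp_neg_mul_add_mul_inv
      ((tendsto_rpow_atTop (by norm_num : (0 : ℝ) < (1 - 1 / 3) / 2)).comp
        tendsto_natCast_atTop_atTop) (c := c₁ / 2 / 2 ^ (1 + 1 / 3 : ℝ)) (by positivity)
      (2 * C / ((1 - 1 / 3) * ε)))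
  filter_upwards [eventually_ge_atTop 1] with k hk
  filter_upwards [eventually_ge_atTop (max N 1)] with n hn
  exact measureReal_truncLT_sum_firstPassage_le_exp_add (hmeas 0) hindep hid hν (by norm_num)
    (by norm_num) (by positivity) hε (fun j => hC ⟨j, rfl⟩) hk (le_of_max_le_right hn) (hq n hn)
end
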